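/- arXiv:2101.09047 — 2 statements merged into one kernel-verified Lean document; each statement's English description precedes it below -/
import Mathlib

section
/- For every fixed λ ∈ Λ̄, every unit vector ξ = (ξ₀¹, ξ₀², ξ₁, ξ₂) ∈ ℝ⁶, and every ρ̄ of the form ρ̄ = μ̄(g₁,g₂) with g₁, g₂ nonnegative, neither almost-everywhere zero, and ν₁₂(1+|v|²)g₁, ν₂₁(1+|v|²)g₂ integrable, the one-dimensional function z̄_ξ(s) = z̄(λ + sξ; ρ̄) attains its minimum at a unique point in the open interval Ī(ξ,λ) = (−s̄_b(−ξ,λ), s̄_b(ξ,λ)), where s̄_b(ξ,λ) = sup{ s : (λ+sξ)¹ ∈ Λ and (λ+sξ)² ∈ Λ } (with value +∞ if the boundary is never met); in particular the minimum is not attained at the endpoints. -/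
open MeasureTheory Real Filter
open scoped Topology

noncomputable section

abbrev V3 : Type := Fin 3 → ℝ

def dot3 (a b : V3) : ℝ := ∑ i, a i * b i

def nsq (v : V3) : ℝ := ∑ i, (v i) ^ 2

abbrev L5 : Type := ℝ × V3 × ℝ

def dot5 (a b : L5) : ℝ := a.1 * b.1 + dot3 a.2.1 b.2.1 + a.2.2 * b.2.2

def aVec (m : ℝ) (v : V3) : L5 := (m, m • v, m * nsq v)

def expA (m : ℝ) (l : L5) (v : V3) : ℝ := Real.exp (dot5 l (aVec m v))

def momVec (m : ℝ) (ν g : V3 → ℝ) : L5 :=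
  (∫ v, ν v * (m * g v), fun i => ∫ v, ν v * (m * v i) * g v,
    ∫ v, ν v * (m * nsq v) * g v)

def zdual (m : ℝ) (ν : V3 → ℝ) (l ρ : L5) : ℝ :=
  (∫ v, ν v * expA m l v) - dot5 l ρ

def entH (z : ℝ) : ℝ := z * Real.log z - z

def dualCLM (ρ : L5) : L5 →L[ℝ] ℝ :=
  LinearMap.toContinuousLinearMap
    { toFun := fun δ => dot5 δ ρ
      map_add' := by
        intro a b
        simp [dot5, dot3, Prod.fst_add, Prod.snd_add, Pi.add_apply, add_mul,
          Finset.sum_add_distrib]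
        ring
      map_smul' := by
        intro c a
        simp only [dot5, dot3, Prod.smul_fst, Prod.smul_snd, Pi.smul_apply,
          smul_eq_mul, Finset.mul_sum, RingHom.id_apply]
        ring_nf
        rw [Finset.mul_sum]
        ring_nf }


abbrev L6 : Type := ℝ × ℝ × V3 × ℝ

/-- First-species component `λ¹ = (λ₀¹, λ₁, λ₂)` of `λ = (λ₀¹, λ₀², λ₁, λ₂)`. -/
def comp1 (l : L6) : L5 := (l.1, l.2.2.1, l.2.2.2)

/-- Second-species component `λ² = (λ₀², λ₁, λ₂)`. -/
def comp2 (l : L6) : L5 := (l.2.1, l.2.2.1, l.2.2.2)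

def dot6 (a b : L6) : ℝ :=
  a.1 * b.1 + a.2.1 * b.2.1 + dot3 a.2.2.1 b.2.2.1 + a.2.2.2 * b.2.2.2

/-- The mixture functional `Φ(λ) = ∫ ν₁₂ exp(λ¹·a¹) + ∫ ν₂₁ exp(λ²·a²)`. -/
def PhiMix (m₁ m₂ : ℝ) (ν₁₂ ν₂₁ : V3 → ℝ) (l : L6) : ℝ :=
  (∫ v, ν₁₂ v * expA m₁ (comp1 l) v) + (∫ v, ν₂₁ v * expA m₂ (comp2 l) v)

/-- The mixture moment map `μ̄(g₁,g₂) ∈ ℝ⁶`. -/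
def muBar (m₁ m₂ : ℝ) (ν₁₂ ν₂₁ g₁ g₂ : V3 → ℝ) : L6 :=
  (∫ v, m₁ * ν₁₂ v * g₁ v,
   ∫ v, m₂ * ν₂₁ v * g₂ v,
   fun i => (∫ v, m₁ * ν₁₂ v * v i * g₁ v) + ∫ v, m₂ * ν₂₁ v * v i * g₂ v,
   (∫ v, m₁ * ν₁₂ v * nsq v * g₁ v) + ∫ v, m₂ * ν₂₁ v * nsq v * g₂ v)

/-- The mixture dual function `z̄(λ;ρ̄) = Φ(λ) − λ·ρ̄`. -/
def zbar (m₁ m₂ : ℝ) (ν₁₂ ν₂₁ : V3 → ℝ) (l ρ : L6) : ℝ :=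
  PhiMix m₁ m₂ ν₁₂ ν₂₁ l - dot6 l ρ

/-!
Since `ρ̄ = μ̄(g₁, g₂)`, the mixture dual function along the line `s ↦ λ + sξ` is the sum of the
two species dual functions `Zₖ(s) = ∫ νₖ exp((λᵏ + sξᵏ)·aᵏ) - (λᵏ + sξᵏ)·ρₖ`, where
`ρₖ = momVec mₖ νₖ gₖ`; both integrands are integrable exactly for `s` in the open interval
`{s | λ₂ + sξ₂ < 0}`. Each `Zₖ` is convex, and strictly convex when `ξᵏ ≠ 0`, because `ξᵏ·aᵏ(v)`
then vanishes only on a quadric, a null set; since `ξ ≠ 0` the sum is strictly convex. It tends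
to `+∞` at both ends of the interval. At a finite end both integrands stop being integrable, and
Fatou's lemma makes both integrals blow up. At an infinite end, a species with `ξᵏ·aᵏ > 0` on a
set of positive measure grows exponentially; otherwise `ξᵏ·ρₖ = ∫ νₖ gₖ ξᵏ·aᵏ` is `≤ 0`, and
`< 0` for a species with `ξᵏ ≠ 0`, so the linear term takes over. Hence the function exceeds its
value at `0` somewhere on either side of `0`, and a strictly convex function with this property
has a unique minimiser, which lies strictly inside the interval.
-/

open Set

theorem StrictConvexOn.existsUnique_isMinOn_of_lt {D : Set ℝ} {f : ℝ → ℝ}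
    (hf : StrictConvexOn ℝ D f) (hD : IsOpen D) {a x b : ℝ} (ha : a ∈ D) (hb : b ∈ D)
    (hax : a < x) (hxb : x < b) (hfa : f x < f a) (hfb : f x < f b) :
    ∃! s, s ∈ D ∧ IsMinOn f D s := by
  have hab : Icc a b ⊆ D := hf.1.ordConnected.out ha hb
  obtain ⟨s, hs, hmin⟩ := isCompact_Icc.exists_isMinOn ⟨x, hax.le, hxb.le⟩
    ((hf.convexOn.continuousOn hD).mono hab)
  have hsa : a < s := lt_of_le_of_ne hs.1 fun h => (hmin ⟨hax.le, hxb.le⟩).not_gt (h ▸ hfa)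
  have hsb : s < b := lt_of_le_of_ne hs.2 fun h => (hmin ⟨hax.le, hxb.le⟩).not_gt (h ▸ hfb)
  have hloc : IsLocalMinOn f D s :=
    Filter.mem_of_superset (mem_nhdsWithin_of_mem_nhds (Icc_mem_nhds hsa hsb)) hmin
  have hglob := IsMinOn.of_isLocalMinOn_of_convexOn (hab hs) hloc hf.convexOn
  exact ⟨s, ⟨hab hs, hglob⟩, fun t ht => hf.eq_of_isMinOn ht.2 hglob ht.1 (hab hs)⟩

theorem convex_setOf_add_mul_neg (p q : ℝ) : Convex ℝ {s : ℝ | p + s * q < 0} := by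
  intro x hx y hy a b ha hb hab
  simp only [mem_ofPred_eq, smul_eq_mul] at hx hy ⊢
  have hsplit : p + (a * x + b * y) * q = a * (p + x * q) + b * (p + y * q) := by
    linear_combination (-p) * hab
  rw [hsplit]
  rcases ha.eq_or_lt with rfl | ha
  · nlinarith
  · nlinarith [mul_neg_of_pos_of_neg ha hx, mul_nonpos_of_nonneg_of_nonpos hb hy.le]

theorem concaveOn_add_mul {D : Set ℝ} (hD : Convex ℝ D) (C κ : ℝ) :
    ConcaveOn ℝ D fun s => C + s * κ :=
  ⟨hD, fun x _ y _ a b _ _ hab => le_of_eq <| by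
    simp only [smul_eq_mul]; linear_combination C * hab⟩

theorem strictConvexOn_mul_exp_affine {c : ℝ} (hc : 0 < c) (a : ℝ) {b : ℝ} (hb : b ≠ 0) :
    StrictConvexOn ℝ univ fun s => c * exp (a + s * b) := by
  refine ⟨convex_univ, fun x _ y _ hxy t u ht hu htu => ?_⟩
  have hne : a + x * b ≠ a + y * b := fun h => hxy (mul_right_cancel₀ hb (add_left_cancel h))
  have := strictConvexOn_exp.2 (mem_univ _) (mem_univ _) hne ht hu htu
  have harg : a + (t * x + u * y) * b = t * (a + x * b) + u * (a + y * b) := by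
    linear_combination (-a) * htu
  simp only [smul_eq_mul] at this ⊢
  rw [harg]
  exact (mul_lt_mul_of_pos_left this hc).trans_eq (by ring)

theorem convexOn_mul_exp_affine {c : ℝ} (hc : 0 ≤ c) (a b : ℝ) :
    ConvexOn ℝ univ fun s => c * exp (a + s * b) := by
  refine ⟨convex_univ, fun x _ y _ t u ht hu htu => ?_⟩
  have := convexOn_exp.2 (mem_univ (a + x * b)) (mem_univ (a + y * b)) ht hu htu
  have harg : a + (t * x + u * y) * b = t * (a + x * b) + u * (a + y * b) := by
    linear_combination (-a) * htu
  simp only [smul_eq_mul] at this ⊢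
  rw [harg]
  exact (mul_le_mul_of_nonneg_left this hc).trans_eq (by ring)

theorem tendsto_mul_exp_sub_linear_atTop {K ε : ℝ} (hK : 0 < K) (hε : 0 < ε) (C κ : ℝ) :
    Tendsto (fun s => K * exp (ε * s) - (C + s * κ)) atTop atTop := by
  have hquad : Tendsto (fun s => s * (K * ε ^ 2 / 2 * s - κ) - C) atTop atTop :=
    tendsto_atTop_add_const_right _ _ (tendsto_id.atTop_mul_atTop₀
      (tendsto_atTop_add_const_right _ _ (tendsto_id.const_mul_atTop (by positivity))))
  refine tendsto_atTop_mono' _ ?_ hquad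
  filter_upwards [eventually_ge_atTop 0] with s hs
  have := quadratic_le_exp_of_nonneg (mul_nonneg hε.le hs)
  nlinarith [mul_nonneg hε.le hs]

section ParametricIntegral

variable {α : Type*} [MeasurableSpace α] {μ : Measure α} {D : Set ℝ} {F : ℝ → α → ℝ}

theorem convexOn_integral (hD : Convex ℝ D) (hF : ∀ᵐ v ∂μ, ConvexOn ℝ D (F · v))
    (hint : ∀ s ∈ D, Integrable (F s) μ) : ConvexOn ℝ D fun s => ∫ v, F s v ∂μ := by
  refine ⟨hD, fun x hx y hy a b ha hb hab => ?_⟩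
  simp only [smul_eq_mul]
  rw [← integral_const_mul, ← integral_const_mul,
    ← integral_add ((hint x hx).const_mul a) ((hint y hy).const_mul b)]
  refine integral_mono_ae (hint _ (hD hx hy ha hb hab)) (((hint x hx).const_mul a).add
    ((hint y hy).const_mul b)) ?_
  filter_upwards [hF] with v hv using hv.2 hx hy ha hb hab

theorem strictConvexOn_integral [NeZero μ] (hD : Convex ℝ D)
    (hF : ∀ᵐ v ∂μ, StrictConvexOn ℝ D (F · v)) (hint : ∀ s ∈ D, Integrable (F s) μ) :
    StrictConvexOn ℝ D fun s => ∫ v, F s v ∂μ := by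
  refine ⟨hD, fun x hx y hy hxy a b ha hb hab => ?_⟩
  have hz := hint _ (hD hx hy ha.le hb.le hab)
  have hxy' : Integrable (fun v => a * F x v + b * F y v) μ :=
    ((hint x hx).const_mul a).add ((hint y hy).const_mul b)
  have hgap : ∀ᵐ v ∂μ, 0 < a * F x v + b * F y v - F (a • x + b • y) v := by
    filter_upwards [hF] with v hv using sub_pos.2 (hv.2 hx hy hxy ha hb hab)
  have hsupp : 0 < μ (Function.support fun v => a * F x v + b * F y v - F (a • x + b • y) v) :=
    (measure_mono fun v (hv : 0 < _) => hv.ne').trans_lt' <|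
      pos_iff_ne_zero.2 (frequently_ae_iff.1 hgap.frequently)
  have := (integral_pos_iff_support_of_nonneg_ae (hgap.mono fun v hv => hv.le)
    (hxy'.sub hz)).2 hsupp
  rw [integral_sub hxy' hz, integral_add ((hint x hx).const_mul a) ((hint y hy).const_mul b),
    integral_const_mul, integral_const_mul, sub_pos] at this
  simpa only [smul_eq_mul] using this

theorem tendsto_integral_atTop_of_not_integrable {ι : Type*} {l : Filter ι}
    [l.IsCountablyGenerated] [l.NeBot] {F : ι → α → ℝ} {G : α → ℝ} (hF0 : ∀ i, 0 ≤ᵐ[μ] F i) (hFm : ∀ i, AEStronglyMeasurable (F i) μ)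
    (hG0 : 0 ≤ᵐ[μ] G) (hGm : AEStronglyMeasurable G μ)
    (hlim : ∀ᵐ v ∂μ, Tendsto (F · v) l (𝓝 (G v))) (hint : ∀ᶠ i in l, Integrable (F i) μ)
    (hG : ¬ Integrable G μ) :
    Tendsto (fun i => ∫ v, F i v ∂μ) l atTop := by
  have htop : ∫⁻ v, ENNReal.ofReal (G v) ∂μ = ⊤ := by
    by_contra h
    exact hG ⟨hGm, (hasFiniteIntegral_iff_ofReal hG0).2 (lt_top_iff_ne_top.2 h)⟩
  have hfatou : ∫⁻ v, ENNReal.ofReal (G v) ∂μ ≤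
      liminf (fun i => ∫⁻ v, ENNReal.ofReal (F i v) ∂μ) l :=
    calc ∫⁻ v, ENNReal.ofReal (G v) ∂μ
        = ∫⁻ v, liminf (fun i => ENNReal.ofReal (F i v)) l ∂μ :=
          lintegral_congr_ae <| hlim.mono fun v hv =>
            ((ENNReal.continuous_ofReal.tendsto _).comp hv).liminf_eq.symm
      _ ≤ _ := lintegral_liminf_le' fun i => (hFm i).aemeasurable.ennreal_ofReal
  rw [← ENNReal.tendsto_ofReal_nhds_top]
  refine (tendsto_of_le_liminf_of_limsup_le (htop ▸ hfatou) le_top).congr' ?_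
  filter_upwards [hint] with i hi
  rw [ofReal_integral_eq_lintegral_ofReal hi (hF0 i)]

end ParametricIntegral

section ExponentialFamily

variable {α : Type*} [MeasurableSpace α] {μ : Measure α} {ν A B : α → ℝ}

theorem exists_mul_exp_le_integral (hν : ∀ v, 0 < ν v) (hB : Measurable B)
    (hpos : μ {v | 0 < B v} ≠ 0)
    (hint : ∀ s, 0 ≤ s → Integrable (fun v => ν v * exp (A v + s * B v)) μ) :
    ∃ K ε : ℝ, 0 < K ∧ 0 < ε ∧
      ∀ s, 0 ≤ s → K * exp (ε * s) ≤ ∫ v, ν v * exp (A v + s * B v) ∂μ := by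
  have hunion : {v | 0 < B v} = ⋃ n : ℕ, {v | 1 / ((n : ℝ) + 1) < B v} := by
    ext v
    simp only [mem_iUnion]
    exact ⟨fun h : 0 < B v => exists_nat_one_div_lt h,
      fun ⟨n, hn⟩ => show 0 < B v from Nat.one_div_pos_of_nat.trans hn⟩
  obtain ⟨n, hn⟩ := exists_measure_pos_of_not_measure_iUnion_null (hunion ▸ hpos)
  set ε : ℝ := 1 / ((n : ℝ) + 1)
  set S := {v | ε < B v}
  have hS : MeasurableSet S := measurableSet_lt measurable_const hB
  have hint0 : Integrable (fun v => ν v * exp (A v)) μ := by simpa using hint 0 le_rfl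
  have hK : 0 < ∫ v in S, ν v * exp (A v) ∂μ := by
    rw [setIntegral_pos_iff_support_of_nonneg_ae
      (ae_of_all _ fun v => (mul_pos (hν v) (exp_pos _)).le) hint0.integrableOn,
      Function.support_eq_univ fun v => (mul_pos (hν v) (exp_pos _)).ne', univ_inter]
    exact hn
  refine ⟨_, ε, hK, Nat.one_div_pos_of_nat, fun s hs => ?_⟩
  calc (∫ v in S, ν v * exp (A v) ∂μ) * exp (ε * s)
      = ∫ v in S, exp (ε * s) * (ν v * exp (A v)) ∂μ := by rw [integral_const_mul, mul_comm]
    _ ≤ ∫ v in S, ν v * exp (A v + s * B v) ∂μ := by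
        refine setIntegral_mono_on (hint0.const_mul _).integrableOn (hint s hs).integrableOn hS
          fun v (hv : ε < B v) => ?_
        rw [exp_add]
        exact (mul_le_mul_of_nonneg_right (exp_le_exp.2 (show ε * s ≤ s * B v by nlinarith))
          (mul_pos (hν v) (exp_pos _)).le).trans_eq (by ring)
    _ ≤ ∫ v, ν v * exp (A v + s * B v) ∂μ :=
        setIntegral_le_integral (hint s hs) (ae_of_all _ fun v => (mul_pos (hν v) (exp_pos _)).le)

theorem tendsto_integral_exp_sub_linear_atTop (hν : ∀ v, 0 < ν v) (hB : Measurable B)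
    (hpos : μ {v | 0 < B v} ≠ 0)
    (hint : ∀ s, 0 ≤ s → Integrable (fun v => ν v * exp (A v + s * B v)) μ) (C κ : ℝ) :
    Tendsto (fun s => (∫ v, ν v * exp (A v + s * B v) ∂μ) - (C + s * κ)) atTop atTop := by
  obtain ⟨K, ε, hK, hε, hle⟩ := exists_mul_exp_le_integral hν hB hpos hint
  refine tendsto_atTop_mono' _ ?_ (tendsto_mul_exp_sub_linear_atTop hK hε C κ)
  filter_upwards [eventually_ge_atTop 0] with s hs using sub_le_sub_right (hle s hs) _

theorem integral_mul_mul_neg_of_ae_neg {g : α → ℝ} (hν : ∀ v, 0 < ν v) (hg0 : ∀ v, 0 ≤ g v)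
    (hg : ¬ g =ᵐ[μ] 0) (hB : ∀ᵐ v ∂μ, B v < 0) (hint : Integrable (fun v => ν v * g v * B v) μ) :
    ∫ v, ν v * g v * B v ∂μ < 0 := by
  have hnonpos : ∀ᵐ v ∂μ, ν v * g v * B v ≤ 0 := hB.mono fun v hv =>
    mul_nonpos_of_nonneg_of_nonpos (mul_nonneg (hν v).le (hg0 v)) hv.le
  refine (integral_nonpos_of_ae hnonpos).lt_of_ne fun h0 => hg ?_
  have hzero := (integral_eq_zero_iff_of_nonneg_ae (hnonpos.mono fun v hv => neg_nonneg.2 hv)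
    hint.neg).1 (by rw [integral_neg, h0, neg_zero])
  filter_upwards [hzero, hB] with v hv hBv
  simpa [(hν v).ne', hBv.ne] using hv

end ExponentialFamily

theorem MeasureTheory.Measure.addHaar_setOf_quadric_eq_zero {E : Type*} [NormedAddCommGroup E]
    [InnerProductSpace ℝ E] [FiniteDimensional ℝ E] [Nontrivial E] [MeasurableSpace E]
    [BorelSpace E] (μ : Measure E) [μ.IsAddHaarMeasure] {a c : ℝ} {b : E}
    (h : a ≠ 0 ∨ b ≠ 0 ∨ c ≠ 0) :
    μ {x | a + inner ℝ b x + c * ‖x‖ ^ 2 = 0} = 0 := by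
  rcases eq_or_ne c 0 with rfl | hc
  · simp only [zero_mul, add_zero]
    rcases eq_or_ne b 0 with rfl | hb
    · simp [h.resolve_right (by simp)]
    have hbb : inner ℝ b b ≠ 0 := inner_self_ne_zero.2 hb
    set w : E := (a / inner ℝ b b) • b
    have hset : {x | a + inner ℝ b x = 0} = (· + w) ⁻¹' ((ℝ ∙ b)ᗮ : Submodule ℝ E) := by
      ext x
      simp only [mem_ofPred_eq, mem_preimage, SetLike.mem_coe,
        Submodule.mem_orthogonal_singleton_iff_inner_right, inner_add_right, inner_smul_right, w]
      rw [div_mul_cancel₀ _ hbb, add_comm]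
    rw [hset, measure_preimage_add_right]
    refine Measure.addHaar_submodule μ _ fun htop => hbb ?_
    exact Submodule.mem_orthogonal_singleton_iff_inner_right.1 (htop ▸ Submodule.mem_top)
  set w : E := -(2 * c)⁻¹ • b
  have hsq : ∀ x, a + inner ℝ b x + c * ‖x‖ ^ 2 = c * (‖x - w‖ ^ 2 - (‖w‖ ^ 2 - a / c)) := by
    intro x
    rw [norm_sub_sq_real, real_inner_comm, inner_smul_right]
    field_simp
    ring
  refine measure_mono_null (fun x (hx : _ = 0) => ?_)
    (Measure.addHaar_sphere μ w √(‖w‖ ^ 2 - a / c))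
  have hx : ‖x - w‖ ^ 2 = ‖w‖ ^ 2 - a / c := by
    simpa [hsq, hc, sub_eq_zero] using hx
  rw [mem_sphere_iff_norm, ← hx, sqrt_sq (norm_nonneg _)]

theorem dot3_add_smul (c d a : V3) (s : ℝ) : dot3 (c + s • d) a = dot3 c a + s * dot3 d a := by
  simp only [dot3, Pi.add_apply, Pi.smul_apply, smul_eq_mul, add_mul, mul_assoc,
    Finset.sum_add_distrib, Finset.mul_sum]

theorem dot5_add_smul (c d a : L5) (s : ℝ) : dot5 (c + s • d) a = dot5 c a + s * dot5 d a := by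
  simp only [dot5, Prod.fst_add, Prod.snd_add, Prod.smul_fst, Prod.smul_snd, smul_eq_mul,
    dot3_add_smul]
  ring

theorem dot5_aVec (d : L5) (m : ℝ) (v : V3) :
    dot5 d (aVec m v) = m * (d.1 + dot3 d.2.1 v + d.2.2 * nsq v) := by
  simp only [dot5, aVec, dot3, Pi.smul_apply, smul_eq_mul, mul_left_comm _ m, ← Finset.mul_sum]
  ring

@[fun_prop]
theorem continuous_dot5_aVec (d : L5) (m : ℝ) : Continuous fun v => dot5 d (aVec m v) := by
  simp only [dot5_aVec, dot3, nsq]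
  fun_prop

theorem expA_add_smul (m : ℝ) (c d : L5) (s : ℝ) (v : V3) :
    expA m (c + s • d) v = exp (dot5 c (aVec m v) + s * dot5 d (aVec m v)) := by
  rw [expA, dot5_add_smul]

theorem nsq_nonneg (v : V3) : 0 ≤ nsq v := Finset.sum_nonneg fun i _ => sq_nonneg (v i)

theorem abs_le_one_add_nsq (v : V3) (i : Fin 3) : |v i| ≤ 1 + nsq v := by
  have : v i ^ 2 ≤ nsq v := Finset.single_le_sum (fun j _ => sq_nonneg (v j)) (Finset.mem_univ i)
  nlinarith [abs_nonneg (v i), sq_abs (v i)]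

theorem ae_dot5_aVec_ne_zero {m : ℝ} (hm : m ≠ 0) {d : L5} (hd : d ≠ 0) :
    ∀ᵐ v, dot5 d (aVec m v) ≠ 0 := by
  have hd' : d.1 ≠ 0 ∨ WithLp.toLp 2 d.2.1 ≠ 0 ∨ d.2.2 ≠ 0 := by
    contrapose! hd
    exact Prod.ext hd.1 (Prod.ext (by simpa using hd.2.1) hd.2.2)
  set S := {x : EuclideanSpace ℝ (Fin 3) |
    d.1 + inner ℝ (WithLp.toLp 2 d.2.1) x + d.2.2 * ‖x‖ ^ 2 = 0}
  have hS : MeasurableSet S := (isClosed_eq (by fun_prop) continuous_const).measurableSet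
  have hpre : {v | dot5 d (aVec m v) = 0} = WithLp.toLp 2 ⁻¹' S := by
    ext v
    simp [S, dot5_aVec, hm, EuclideanSpace.real_norm_sq_eq, EuclideanSpace.inner_toLp_toLp,
      dot3, nsq, dotProduct, mul_comm]
  have hnull : volume {v | dot5 d (aVec m v) = 0} = 0 := by
    rw [hpre, (PiLp.volume_preserving_toLp (Fin 3)).measure_preimage hS.nullMeasurableSet]
    exact Measure.addHaar_setOf_quadric_eq_zero volume hd'
  exact ae_iff.2 (by simpa using hnull)

section Moments

variable {m : ℝ} {ν g : V3 → ℝ}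

theorem integrable_moment (hν : Measurable ν) (hg : Measurable g) (hν0 : ∀ v, 0 ≤ ν v)
    (hg0 : ∀ v, 0 ≤ g v) (hint : Integrable (fun v => ν v * (1 + nsq v) * g v))
    {w : V3 → ℝ} (hw : Measurable w) (hwle : ∀ v, |w v| ≤ 1 + nsq v) :
    Integrable (fun v => ν v * (m * w v) * g v) := by
  refine (hint.const_mul |m|).mono' ((hν.mul (hw.const_mul m)).mul hg).aestronglyMeasurable
    (ae_of_all _ fun v => ?_)
  rw [norm_eq_abs, abs_mul, abs_mul, abs_mul, abs_of_nonneg (hν0 v), abs_of_nonneg (hg0 v)]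
  have := mul_le_mul_of_nonneg_left (hwle v) (abs_nonneg m)
  have := mul_nonneg (hν0 v) (hg0 v)
  nlinarith

theorem mul_dot5_aVec_eq (d : L5) (v : V3) :
    ν v * g v * dot5 d (aVec m v) = d.1 * (ν v * (m * g v)) +
      ∑ i, d.2.1 i * (ν v * (m * v i) * g v) + d.2.2 * (ν v * (m * nsq v) * g v) := by
  have hsum : ∑ i, d.2.1 i * (ν v * (m * v i) * g v) = ν v * g v * m * dot3 d.2.1 v := by
    rw [dot3, Finset.mul_sum]
    exact Finset.sum_congr rfl fun i _ => by ring
  rw [hsum, dot5_aVec]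
  ring

theorem integral_mul_dot5_aVec (hν : Measurable ν) (hg : Measurable g) (hν0 : ∀ v, 0 ≤ ν v)
    (hg0 : ∀ v, 0 ≤ g v) (hint : Integrable (fun v => ν v * (1 + nsq v) * g v)) (d : L5) :
    Integrable (fun v => ν v * g v * dot5 d (aVec m v)) ∧
      ∫ v, ν v * g v * dot5 d (aVec m v) = dot5 d (momVec m ν g) := by
  have h0 : Integrable fun v => ν v * (m * g v) :=
    (integrable_moment (w := fun _ => 1) hν hg hν0 hg0 hint measurable_const
      fun v => by simpa using nsq_nonneg v).congr (ae_of_all _ fun v => by ring)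
  have h1 : ∀ i, Integrable fun v => ν v * (m * v i) * g v := fun i =>
    integrable_moment hν hg hν0 hg0 hint (measurable_pi_apply i) (abs_le_one_add_nsq · i)
  have h2 : Integrable fun v => ν v * (m * nsq v) * g v :=
    integrable_moment hν hg hν0 hg0 hint (by unfold nsq; fun_prop)
      (fun v => by rw [abs_of_nonneg (nsq_nonneg v)]; linarith)
  have hsum : Integrable fun v => ∑ i, d.2.1 i * (ν v * (m * v i) * g v) :=
    integrable_finsetSum _ fun i _ => (h1 i).const_mul _
  have h01 : Integrable fun v =>
      d.1 * (ν v * (m * g v)) + ∑ i, d.2.1 i * (ν v * (m * v i) * g v) :=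
    (h0.const_mul _).add hsum
  simp only [mul_dot5_aVec_eq]
  refine ⟨h01.add (h2.const_mul _), ?_⟩
  rw [integral_add h01 (h2.const_mul _), integral_add (h0.const_mul _) hsum,
    integral_finsetSum _ fun i _ => (h1 i).const_mul _]
  simp only [integral_const_mul]
  rfl

end Moments

theorem dot6_muBar (m₁ m₂ : ℝ) (ν₁₂ ν₂₁ g₁ g₂ : V3 → ℝ) (l : L6) :
    dot6 l (muBar m₁ m₂ ν₁₂ ν₂₁ g₁ g₂) =
      dot5 (comp1 l) (momVec m₁ ν₁₂ g₁) + dot5 (comp2 l) (momVec m₂ ν₂₁ g₂) := by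
  simp only [dot6, dot5, dot3, muBar, momVec, comp1, comp2, mul_comm m₁, mul_comm m₂, mul_assoc,
    mul_add, Finset.sum_add_distrib]
  ring

theorem zbar_muBar (m₁ m₂ : ℝ) (ν₁₂ ν₂₁ g₁ g₂ : V3 → ℝ) (l : L6) :
    zbar m₁ m₂ ν₁₂ ν₂₁ l (muBar m₁ m₂ ν₁₂ ν₂₁ g₁ g₂) =
      zdual m₁ ν₁₂ (comp1 l) (momVec m₁ ν₁₂ g₁) + zdual m₂ ν₂₁ (comp2 l) (momVec m₂ ν₂₁ g₂) := by
  rw [zbar, PhiMix, dot6_muBar, zdual, zdual]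
  ring

section Species

variable {m : ℝ} {ν g : V3 → ℝ} {c d : L5}

theorem zdual_add_smul (ρ : L5) (s : ℝ) :
    zdual m ν (c + s • d) ρ = (∫ v, ν v * exp (dot5 c (aVec m v) + s * dot5 d (aVec m v))) -
      (dot5 c ρ + s * dot5 d ρ) := by
  simp only [zdual, expA_add_smul, dot5_add_smul]

theorem integrable_exp_line_iff
    (hass : ∀ l : L5, Integrable (fun v => ν v * expA m l v) ↔ l.2.2 < 0) (s : ℝ) :
    Integrable (fun v => ν v * exp (dot5 c (aVec m v) + s * dot5 d (aVec m v))) ↔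
      c.2.2 + s * d.2.2 < 0 := by
  have := hass (c + s • d)
  simp only [expA_add_smul] at this
  exact this

theorem convexOn_zdual_line (hν : ∀ v, 0 < ν v)
    (hass : ∀ l : L5, Integrable (fun v => ν v * expA m l v) ↔ l.2.2 < 0) (ρ : L5) :
    ConvexOn ℝ {s | c.2.2 + s * d.2.2 < 0} fun s => zdual m ν (c + s • d) ρ := by
  have hD := convex_setOf_add_mul_neg c.2.2 d.2.2
  simp only [zdual_add_smul]
  exact (convexOn_integral hD (ae_of_all _ fun v =>
      (convexOn_mul_exp_affine (hν v).le _ _).subset (subset_univ _) hD)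
    fun s hs => (integrable_exp_line_iff hass s).2 hs).sub (concaveOn_add_mul hD _ _)

theorem strictConvexOn_zdual_line (hm : m ≠ 0) (hν : ∀ v, 0 < ν v)
    (hass : ∀ l : L5, Integrable (fun v => ν v * expA m l v) ↔ l.2.2 < 0) (hd : d ≠ 0)
    (ρ : L5) : StrictConvexOn ℝ {s | c.2.2 + s * d.2.2 < 0} fun s => zdual m ν (c + s • d) ρ := by
  have hD := convex_setOf_add_mul_neg c.2.2 d.2.2
  simp only [zdual_add_smul]
  refine (strictConvexOn_integral hD ?_ fun s hs =>
    (integrable_exp_line_iff hass s).2 hs).sub_concaveOn (concaveOn_add_mul hD _ _)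
  filter_upwards [ae_dot5_aVec_ne_zero hm hd] with v hv
  exact (strictConvexOn_mul_exp_affine (hν v) _ hv).subset (subset_univ _) hD

theorem tendsto_zdual_line_nhdsLT (hνm : Measurable ν) (hν : ∀ v, 0 < ν v)
    (hass : ∀ l : L5, Integrable (fun v => ν v * expA m l v) ↔ l.2.2 < 0) {β : ℝ}
    (hβ : c.2.2 + β * d.2.2 = 0) (hlt : ∀ᶠ s in 𝓝[<] β, c.2.2 + s * d.2.2 < 0) (ρ : L5) :
    Tendsto (fun s => zdual m ν (c + s • d) ρ) (𝓝[<] β) atTop := by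
  have hcont : ∀ v, Continuous fun s => ν v * exp (dot5 c (aVec m v) + s * dot5 d (aVec m v)) :=
    fun v => by fun_prop
  have hmeas : ∀ s, AEStronglyMeasurable
      (fun v => ν v * exp (dot5 c (aVec m v) + s * dot5 d (aVec m v))) :=
    fun s => (hνm.mul (by fun_prop : Continuous fun v =>
      exp (dot5 c (aVec m v) + s * dot5 d (aVec m v))).measurable).aestronglyMeasurable
  have hF := tendsto_integral_atTop_of_not_integrable
    (fun s => ae_of_all _ fun v => (mul_pos (hν v) (exp_pos _)).le) hmeas
    (ae_of_all _ fun v => (mul_pos (hν v) (exp_pos _)).le) (hmeas β)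
    (ae_of_all _ fun v => ((hcont v).tendsto β).mono_left nhdsWithin_le_nhds)
    (hlt.mono fun s hs => (integrable_exp_line_iff hass s).2 hs)
    (fun h => ((integrable_exp_line_iff hass β).1 h).ne hβ)
  simp only [zdual_add_smul, sub_eq_add_neg]
  exact hF.atTop_add ((by fun_prop : Continuous fun s => -(dot5 c ρ + s * dot5 d ρ)).tendsto β
    |>.mono_left nhdsWithin_le_nhds)

theorem neg_le_zdual_line (hν : ∀ v, 0 < ν v) (ρ : L5) (s : ℝ) :
    -(dot5 c ρ + s * dot5 d ρ) ≤ zdual m ν (c + s • d) ρ := by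
  have : 0 ≤ ∫ v, ν v * exp (dot5 c (aVec m v) + s * dot5 d (aVec m v)) :=
    integral_nonneg fun v => (mul_pos (hν v) (exp_pos _)).le
  rw [zdual_add_smul]
  linarith

theorem zdual_line_tendsto_or_ae_nonpos (hν : ∀ v, 0 < ν v)
    (hass : ∀ l : L5, Integrable (fun v => ν v * expA m l v) ↔ l.2.2 < 0)
    (hD : ∀ s, 0 ≤ s → c.2.2 + s * d.2.2 < 0) (ρ : L5) :
    Tendsto (fun s : ℝ => zdual m ν (c + s • d) ρ) atTop atTop ∨
      ∀ᵐ v, dot5 d (aVec m v) ≤ 0 := by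
  by_cases hpos : volume {v | 0 < dot5 d (aVec m v)} = 0
  · exact Or.inr (ae_iff.2 (by simpa using hpos))
  · simp only [zdual_add_smul]
    exact Or.inl (tendsto_integral_exp_sub_linear_atTop hν (continuous_dot5_aVec d m).measurable
      hpos (fun s hs => (integrable_exp_line_iff hass s).2 (hD s hs)) _ _)

theorem zdual_line_eventually_ge (hνm : Measurable ν) (hν : ∀ v, 0 < ν v)
    (hass : ∀ l : L5, Integrable (fun v => ν v * expA m l v) ↔ l.2.2 < 0)
    (hgm : Measurable g) (hg0 : ∀ v, 0 ≤ g v)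
    (hgint : Integrable (fun v => ν v * (1 + nsq v) * g v))
    (hD : ∀ s, 0 ≤ s → c.2.2 + s * d.2.2 < 0) :
    ∃ M, ∀ᶠ s : ℝ in atTop, M ≤ zdual m ν (c + s • d) (momVec m ν g) := by
  rcases zdual_line_tendsto_or_ae_nonpos hν hass hD (momVec m ν g) with h | h
  · exact ⟨0, h.eventually_ge_atTop 0⟩
  obtain ⟨-, heq⟩ := integral_mul_dot5_aVec (m := m) hνm hgm (fun v => (hν v).le) hg0 hgint d
  have hκ : dot5 d (momVec m ν g) ≤ 0 := heq ▸ integral_nonpos_of_ae (h.mono fun v hv =>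
    mul_nonpos_of_nonneg_of_nonpos (mul_nonneg (hν v).le (hg0 v)) hv)
  refine ⟨-dot5 c (momVec m ν g), ?_⟩
  filter_upwards [eventually_ge_atTop 0] with s hs
  linarith [neg_le_zdual_line (m := m) (c := c) (d := d) hν (momVec m ν g) s,
    mul_nonpos_of_nonneg_of_nonpos hs hκ]

theorem tendsto_zdual_line_atTop (hm : m ≠ 0) (hd : d ≠ 0) (hνm : Measurable ν)
    (hν : ∀ v, 0 < ν v) (hass : ∀ l : L5, Integrable (fun v => ν v * expA m l v) ↔ l.2.2 < 0)
    (hgm : Measurable g) (hg0 : ∀ v, 0 ≤ g v) (hg : ¬ g =ᵐ[volume] 0)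
    (hgint : Integrable (fun v => ν v * (1 + nsq v) * g v))
    (hD : ∀ s, 0 ≤ s → c.2.2 + s * d.2.2 < 0) :
    Tendsto (fun s : ℝ => zdual m ν (c + s • d) (momVec m ν g)) atTop atTop := by
  rcases zdual_line_tendsto_or_ae_nonpos hν hass hD (momVec m ν g) with h | h
  · exact h
  obtain ⟨hint, heq⟩ := integral_mul_dot5_aVec (m := m) hνm hgm (fun v => (hν v).le) hg0 hgint d
  have hκ : dot5 d (momVec m ν g) < 0 := heq ▸ integral_mul_mul_neg_of_ae_neg hν hg0 hg
    (by filter_upwards [h, ae_dot5_aVec_ne_zero hm hd] with v h1 h2 using h1.lt_of_ne h2) hint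
  refine tendsto_atTop_mono (neg_le_zdual_line (m := m) (c := c) (d := d) hν _) ?_
  exact ((tendsto_id.atTop_mul_const (neg_pos.2 hκ)).atTop_add
    (tendsto_const_nhds (x := -dot5 c (momVec m ν g)))).congr fun s => by simp only [id]; ring

end Species

theorem comp1_add_smul (l ξ : L6) (s : ℝ) : comp1 (l + s • ξ) = comp1 l + s • comp1 ξ := rfl

theorem comp2_add_smul (l ξ : L6) (s : ℝ) : comp2 (l + s • ξ) = comp2 l + s • comp2 ξ := rfl

theorem comp1_ne_zero_or_comp2_ne_zero {ξ : L6} (hξ : ξ ≠ 0) : comp1 ξ ≠ 0 ∨ comp2 ξ ≠ 0 := by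
  contrapose! hξ
  obtain ⟨h1, h2⟩ := hξ
  simp only [comp1, comp2, Prod.ext_iff, Prod.fst_zero, Prod.snd_zero] at h1 h2 ⊢
  exact ⟨h1.1, h2.1, h1.2⟩

section Mixture

variable {m₁ m₂ : ℝ} {ν₁₂ ν₂₁ g₁ g₂ : V3 → ℝ}

theorem strictConvexOn_zbar_line (hm₁ : m₁ ≠ 0) (hm₂ : m₂ ≠ 0)
    (hν₁₂ : ∀ v, 0 < ν₁₂ v) (hν₂₁ : ∀ v, 0 < ν₂₁ v)
    (hass₁ : ∀ l : L5, Integrable (fun v => ν₁₂ v * expA m₁ l v) ↔ l.2.2 < 0)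
    (hass₂ : ∀ l : L5, Integrable (fun v => ν₂₁ v * expA m₂ l v) ↔ l.2.2 < 0)
    (l : L6) {ξ : L6} (hξ : ξ ≠ 0) :
    StrictConvexOn ℝ {s | l.2.2.2 + s * ξ.2.2.2 < 0}
      fun s => zbar m₁ m₂ ν₁₂ ν₂₁ (l + s • ξ) (muBar m₁ m₂ ν₁₂ ν₂₁ g₁ g₂) := by
  simp only [zbar_muBar, comp1_add_smul, comp2_add_smul]
  rcases comp1_ne_zero_or_comp2_ne_zero hξ with h | h
  · exact (strictConvexOn_zdual_line (c := comp1 l) hm₁ hν₁₂ hass₁ h _).add_convexOn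
      (convexOn_zdual_line (c := comp2 l) (d := comp2 ξ) hν₂₁ hass₂ _)
  · exact (convexOn_zdual_line (c := comp1 l) (d := comp1 ξ) hν₁₂ hass₁ _).add_strictConvexOn
      (strictConvexOn_zdual_line (c := comp2 l) hm₂ hν₂₁ hass₂ h _)

theorem tendsto_zbar_line_atTop (hm₁ : m₁ ≠ 0) (hm₂ : m₂ ≠ 0)
    (hν₁₂m : Measurable ν₁₂) (hν₂₁m : Measurable ν₂₁)
    (hν₁₂ : ∀ v, 0 < ν₁₂ v) (hν₂₁ : ∀ v, 0 < ν₂₁ v)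
    (hass₁ : ∀ l : L5, Integrable (fun v => ν₁₂ v * expA m₁ l v) ↔ l.2.2 < 0)
    (hass₂ : ∀ l : L5, Integrable (fun v => ν₂₁ v * expA m₂ l v) ↔ l.2.2 < 0)
    (hg₁m : Measurable g₁) (hg₂m : Measurable g₂) (hg₁0 : ∀ v, 0 ≤ g₁ v) (hg₂0 : ∀ v, 0 ≤ g₂ v)
    (hg₁ : ¬ g₁ =ᵐ[volume] 0) (hg₂ : ¬ g₂ =ᵐ[volume] 0)
    (hg₁int : Integrable (fun v => ν₁₂ v * (1 + nsq v) * g₁ v))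
    (hg₂int : Integrable (fun v => ν₂₁ v * (1 + nsq v) * g₂ v))
    {l ξ : L6} (hξ : ξ ≠ 0) (hD : ∀ s, 0 ≤ s → l.2.2.2 + s * ξ.2.2.2 < 0) :
    Tendsto (fun s : ℝ => zbar m₁ m₂ ν₁₂ ν₂₁ (l + s • ξ) (muBar m₁ m₂ ν₁₂ ν₂₁ g₁ g₂))
      atTop atTop := by
  simp only [zbar_muBar, comp1_add_smul, comp2_add_smul]
  rcases comp1_ne_zero_or_comp2_ne_zero hξ with h | h
  · obtain ⟨M, hM⟩ := zdual_line_eventually_ge (c := comp2 l) (d := comp2 ξ) hν₂₁m hν₂₁ hass₂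
      hg₂m hg₂0 hg₂int hD
    exact tendsto_atTop_add_right_of_le' _ M (tendsto_zdual_line_atTop (c := comp1 l) hm₁ h
      hν₁₂m hν₁₂ hass₁ hg₁m hg₁0 hg₁ hg₁int hD) hM
  · obtain ⟨M, hM⟩ := zdual_line_eventually_ge (c := comp1 l) (d := comp1 ξ) hν₁₂m hν₁₂ hass₁
      hg₁m hg₁0 hg₁int hD
    exact tendsto_atTop_add_left_of_le' _ M hM (tendsto_zdual_line_atTop (c := comp2 l) hm₂ h
      hν₂₁m hν₂₁ hass₂ hg₂m hg₂0 hg₂ hg₂int hD)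

theorem tendsto_zbar_line_nhdsLT (hν₁₂m : Measurable ν₁₂) (hν₂₁m : Measurable ν₂₁)
    (hν₁₂ : ∀ v, 0 < ν₁₂ v) (hν₂₁ : ∀ v, 0 < ν₂₁ v)
    (hass₁ : ∀ l : L5, Integrable (fun v => ν₁₂ v * expA m₁ l v) ↔ l.2.2 < 0)
    (hass₂ : ∀ l : L5, Integrable (fun v => ν₂₁ v * expA m₂ l v) ↔ l.2.2 < 0)
    {l ξ : L6} {β : ℝ} (hβ : l.2.2.2 + β * ξ.2.2.2 = 0)
    (hlt : ∀ᶠ s in 𝓝[<] β, l.2.2.2 + s * ξ.2.2.2 < 0) :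
    Tendsto (fun s : ℝ => zbar m₁ m₂ ν₁₂ ν₂₁ (l + s • ξ) (muBar m₁ m₂ ν₁₂ ν₂₁ g₁ g₂))
      (𝓝[<] β) atTop := by
  simp only [zbar_muBar, comp1_add_smul, comp2_add_smul]
  exact (tendsto_zdual_line_nhdsLT (c := comp1 l) (d := comp1 ξ) hν₁₂m hν₁₂ hass₁ hβ hlt
    _).atTop_add_atTop (tendsto_zdual_line_nhdsLT (c := comp2 l) (d := comp2 ξ) hν₂₁m hν₂₁
    hass₂ hβ hlt _)

theorem exists_pos_zbar_line_gt (hm₁ : m₁ ≠ 0) (hm₂ : m₂ ≠ 0)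
    (hν₁₂m : Measurable ν₁₂) (hν₂₁m : Measurable ν₂₁)
    (hν₁₂ : ∀ v, 0 < ν₁₂ v) (hν₂₁ : ∀ v, 0 < ν₂₁ v)
    (hass₁ : ∀ l : L5, Integrable (fun v => ν₁₂ v * expA m₁ l v) ↔ l.2.2 < 0)
    (hass₂ : ∀ l : L5, Integrable (fun v => ν₂₁ v * expA m₂ l v) ↔ l.2.2 < 0)
    (hg₁m : Measurable g₁) (hg₂m : Measurable g₂) (hg₁0 : ∀ v, 0 ≤ g₁ v) (hg₂0 : ∀ v, 0 ≤ g₂ v)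
    (hg₁ : ¬ g₁ =ᵐ[volume] 0) (hg₂ : ¬ g₂ =ᵐ[volume] 0)
    (hg₁int : Integrable (fun v => ν₁₂ v * (1 + nsq v) * g₁ v))
    (hg₂int : Integrable (fun v => ν₂₁ v * (1 + nsq v) * g₂ v))
    {l : L6} (hl : l.2.2.2 < 0) {ξ : L6} (hξ : ξ ≠ 0) :
    ∃ b > 0, l.2.2.2 + b * ξ.2.2.2 < 0 ∧
      zbar m₁ m₂ ν₁₂ ν₂₁ l (muBar m₁ m₂ ν₁₂ ν₂₁ g₁ g₂) <
        zbar m₁ m₂ ν₁₂ ν₂₁ (l + b • ξ) (muBar m₁ m₂ ν₁₂ ν₂₁ g₁ g₂) := by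
  set f := fun s : ℝ => zbar m₁ m₂ ν₁₂ ν₂₁ (l + s • ξ) (muBar m₁ m₂ ν₁₂ ν₂₁ g₁ g₂)
  suffices ∃ L : Filter ℝ, L.NeBot ∧ Tendsto f L atTop ∧
      ∀ᶠ s in L, 0 < s ∧ l.2.2.2 + s * ξ.2.2.2 < 0 by
    obtain ⟨L, hL, hf, hpos⟩ := this
    obtain ⟨b, ⟨hb, hbD⟩, hfb⟩ := (hpos.and (hf.eventually_gt_atTop (f 0))).exists
    exact ⟨b, hb, hbD, by simpa [f] using hfb⟩
  rcases le_or_gt ξ.2.2.2 0 with hξ₂ | hξ₂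
  · have hD : ∀ s : ℝ, 0 ≤ s → l.2.2.2 + s * ξ.2.2.2 < 0 := fun s hs => by nlinarith
    exact ⟨atTop, inferInstance, tendsto_zbar_line_atTop hm₁ hm₂ hν₁₂m hν₂₁m hν₁₂ hν₂₁ hass₁
      hass₂ hg₁m hg₂m hg₁0 hg₂0 hg₁ hg₂ hg₁int hg₂int hξ hD,
      (eventually_gt_atTop 0).mono fun s hs => ⟨hs, hD s hs.le⟩⟩
  · set β := -l.2.2.2 / ξ.2.2.2
    have hβ : l.2.2.2 + β * ξ.2.2.2 = 0 := by rw [div_mul_cancel₀ _ hξ₂.ne']; ring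
    have hβpos : 0 < β := div_pos (neg_pos.2 hl) hξ₂
    have hlt : ∀ᶠ s in 𝓝[<] β, l.2.2.2 + s * ξ.2.2.2 < 0 :=
      eventually_nhdsWithin_of_forall fun s (hs : s < β) => by nlinarith
    refine ⟨𝓝[<] β, inferInstance,
      tendsto_zbar_line_nhdsLT hν₁₂m hν₂₁m hν₁₂ hν₂₁ hass₁ hass₂ hβ hlt, ?_⟩
    filter_upwards [Ioo_mem_nhdsLT hβpos, hlt] with s hs hs' using ⟨hs.1, hs'⟩

end Mixture

theorem mixture_min_on_line_general
    (m₁ m₂ : ℝ) (hm₁ : 0 < m₁) (hm₂ : 0 < m₂)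
    (ν₁₂ ν₂₁ : V3 → ℝ) (hν₁₂meas : Measurable ν₁₂) (hν₂₁meas : Measurable ν₂₁)
    (hν₁₂pos : ∀ v, 0 < ν₁₂ v) (hν₂₁pos : ∀ v, 0 < ν₂₁ v)
    (hass₁ : ∀ l : L5, Integrable (fun v => ν₁₂ v * expA m₁ l v) ↔ l.2.2 < 0)
    (hass₂ : ∀ l : L5, Integrable (fun v => ν₂₁ v * expA m₂ l v) ↔ l.2.2 < 0)
    (l : L6) (hl : l.2.2.2 < 0)
    (ξ : L6) (hξ : ‖ξ‖ = 1)
    (g₁ g₂ : V3 → ℝ) (hg₁meas : Measurable g₁) (hg₂meas : Measurable g₂)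
    (hg₁0 : ∀ v, 0 ≤ g₁ v) (hg₂0 : ∀ v, 0 ≤ g₂ v)
    (hg₁ne : ¬ g₁ =ᵐ[volume] (fun _ => (0 : ℝ)))
    (hg₂ne : ¬ g₂ =ᵐ[volume] (fun _ => (0 : ℝ)))
    (hg₁int : Integrable (fun v => ν₁₂ v * (1 + nsq v) * g₁ v))
    (hg₂int : Integrable (fun v => ν₂₁ v * (1 + nsq v) * g₂ v)) :
    ∃! s : ℝ,
      ((comp1 (l + s • ξ)).2.2 < 0 ∧ (comp2 (l + s • ξ)).2.2 < 0) ∧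
      ∀ t : ℝ, (comp1 (l + t • ξ)).2.2 < 0 → (comp2 (l + t • ξ)).2.2 < 0 →
        zbar m₁ m₂ ν₁₂ ν₂₁ (l + s • ξ) (muBar m₁ m₂ ν₁₂ ν₂₁ g₁ g₂) ≤
          zbar m₁ m₂ ν₁₂ ν₂₁ (l + t • ξ) (muBar m₁ m₂ ν₁₂ ν₂₁ g₁ g₂) := by
  have hξ0 : ξ ≠ 0 := by rintro rfl; simp at hξ
  have hgt := fun {ξ : L6} (hξ : ξ ≠ 0) => exists_pos_zbar_line_gt hm₁.ne' hm₂.ne' hν₁₂meas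
    hν₂₁meas hν₁₂pos hν₂₁pos hass₁ hass₂ hg₁meas hg₂meas hg₁0 hg₂0 hg₁ne hg₂ne hg₁int hg₂int hl hξ
  obtain ⟨b, hb, hbD, hfb⟩ := hgt hξ0
  obtain ⟨a, ha, haD, hfa⟩ := hgt (neg_ne_zero.2 hξ0)
  rw [smul_neg, ← neg_smul] at hfa
  rw [Prod.snd_neg, Prod.snd_neg, Prod.snd_neg, mul_neg, ← neg_mul] at haD
  obtain ⟨s, ⟨hsD, hmin⟩, huniq⟩ := (strictConvexOn_zbar_line (g₁ := g₁) (g₂ := g₂) hm₁.ne'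
    hm₂.ne' hν₁₂pos hν₂₁pos hass₁ hass₂ l hξ0).existsUnique_isMinOn_of_lt
    (isOpen_lt (by fun_prop) continuous_const) haD hbD (neg_neg_of_pos ha) hb
    (by simpa using hfa) (by simpa using hfb)
  exact ⟨s, ⟨⟨hsD, hsD⟩, fun t ht _ => hmin ht⟩,
    fun t ⟨⟨ht, _⟩, htmin⟩ => huniq t ⟨ht, fun u hu => htmin u hu hu⟩⟩

/-- for `λ ∈ Λ̄`, a unit direction `ξ ∈ ℝ⁶`, and `ρ̄ = μ̄(g₁,g₂)`
with admissible `g₁, g₂`, the function `s ↦ z̄(λ + sξ; ρ̄)` attains its minimum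
at a unique point of the open interval
`Ī(ξ,λ) = {s : (λ+sξ)¹ ∈ Λ and (λ+sξ)² ∈ Λ}`; in particular the minimum is not
attained at the endpoints. -/
theorem mixture_min_on_line
    (m₁ m₂ : ℝ) (hm₁ : 0 < m₁) (hm₂ : 0 < m₂)
    (ν₁₂ ν₂₁ : V3 → ℝ) (hν₁₂meas : Measurable ν₁₂) (hν₂₁meas : Measurable ν₂₁)
    (hν₁₂pos : ∀ v, 0 < ν₁₂ v) (hν₂₁pos : ∀ v, 0 < ν₂₁ v)
    (hass₁ : ∀ l : L5, Integrable (fun v => ν₁₂ v * expA m₁ l v) ↔ l.2.2 < 0)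
    (hass₂ : ∀ l : L5, Integrable (fun v => ν₂₁ v * expA m₂ l v) ↔ l.2.2 < 0)
    (hass₁' : ∀ l : L5, l.2.2 < 0 →
      Integrable (fun v => ν₁₂ v * (1 + nsq v) * expA m₁ l v))
    (hass₂' : ∀ l : L5, l.2.2 < 0 →
      Integrable (fun v => ν₂₁ v * (1 + nsq v) * expA m₂ l v))
    (l : L6) (hl : l.2.2.2 < 0)
    (ξ : L6) (hξ : ‖ξ‖ = 1)
    (g₁ g₂ : V3 → ℝ) (hg₁meas : Measurable g₁) (hg₂meas : Measurable g₂)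
    (hg₁0 : ∀ v, 0 ≤ g₁ v) (hg₂0 : ∀ v, 0 ≤ g₂ v)
    (hg₁ne : ¬ g₁ =ᵐ[volume] (fun _ => (0 : ℝ)))
    (hg₂ne : ¬ g₂ =ᵐ[volume] (fun _ => (0 : ℝ)))
    (hg₁int : Integrable (fun v => ν₁₂ v * (1 + nsq v) * g₁ v))
    (hg₂int : Integrable (fun v => ν₂₁ v * (1 + nsq v) * g₂ v)) :
    ∃! s : ℝ,
      ((comp1 (l + s • ξ)).2.2 < 0 ∧ (comp2 (l + s • ξ)).2.2 < 0) ∧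
      ∀ t : ℝ, (comp1 (l + t • ξ)).2.2 < 0 → (comp2 (l + t • ξ)).2.2 < 0 →
        zbar m₁ m₂ ν₁₂ ν₂₁ (l + s • ξ) (muBar m₁ m₂ ν₁₂ ν₂₁ g₁ g₂) ≤
          zbar m₁ m₂ ν₁₂ ν₂₁ (l + t • ξ) (muBar m₁ m₂ ν₁₂ ν₂₁ g₁ g₂) :=
  mixture_min_on_line_general m₁ m₂ hm₁ hm₂ ν₁₂ ν₂₁ hν₁₂meas hν₂₁meas hν₁₂pos hν₂₁pos hass₁ hass₂ l
    hl ξ hξ g₁ g₂ hg₁meas hg₂meas hg₁0 hg₂0 hg₁ne hg₂ne hg₁int hg₂int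
end
end

section
/- Let g₁, g₂ > 0, let M₁₁, M₂₂ be the single-species target Maxwellians satisfying the intra-species constraints relative to g₁, g₂, and let M₁₂, M₂₁ be inter-species target Maxwellians of the form M₁₂ = exp(m₁λ₀¹² + m₁λ₁·v + m₁λ₂|v|²), M₂₁ = exp(m₂λ₀²¹ + m₂λ₁·v + m₂λ₂|v|²) with λ₂ < 0, satisfying the inter-species constraints relative to (g₁,g₂). Assume the single-species dissipation terms satisfy ∫ ν_{kk} log(g_k/M_{kk})(M_{kk} − g_k) dv ≤ 0 with equality iff g_k = M_{kk} (k = 1,2). Then the total dissipation S(g₁,g₂) = ∫ ν₁₁ log g₁ (M₁₁ − g₁) dv + ∫ ν₁₂ log g₁ (M₁₂ − g₁) dv + ∫ ν₂₁ log g₂ (M₂₁ − g₂) dv + ∫ ν₂₂ log g₂ (M₂₂ − g₂) dv is ≤ 0, with equality if and only if g₁ and g₂ are Maxwellian distributions with equal mean velocity and equal temperature. -/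
open MeasureTheory Real Filter
open scoped Topology

noncomputable section

section Helpers

lemma factor_nonpos {x y : ℝ} (hx : 0 < x) (hy : 0 < y) :
    (Real.log x - Real.log y) * (y - x) ≤ 0 := by
  rcases le_total x y with h | h
  · exact mul_nonpos_of_nonpos_of_nonneg (sub_nonpos.2 (Real.log_le_log hx h))
      (sub_nonneg.2 h)
  · exact mul_nonpos_of_nonneg_of_nonpos (sub_nonneg.2 (Real.log_le_log hy h))
      (sub_nonpos.2 h)

lemma factor_eq {x y : ℝ} (hx : 0 < x) (hy : 0 < y)
    (h : (Real.log x - Real.log y) * (y - x) = 0) : x = y := by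
  rcases mul_eq_zero.mp h with h' | h'
  · exact Real.log_injOn_pos (Set.mem_Ioi.2 hx) (Set.mem_Ioi.2 hy) (sub_eq_zero.mp h')
  · exact (sub_eq_zero.mp h').symm

lemma nonpos_int_zero {f : V3 → ℝ} (hf : Integrable f) (hle : ∀ v, f v ≤ 0)
    (h0 : (∫ v, f v) = 0) : f =ᵐ[volume] 0 := by
  have h1 : (∫ v, -f v) = 0 := by rw [integral_neg, h0, neg_zero]
  have := (integral_eq_zero_iff_of_nonneg (fun v => neg_nonneg.2 (hle v)) hf.neg).mp h1
  filter_upwards [this] with v hv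
  simpa [Pi.neg_apply, neg_eq_zero] using hv

lemma extract_eq (ν G M : V3 → ℝ) (hν : ∀ v, 0 < ν v) (hG : ∀ v, 0 < G v)
    (hM : ∀ v, 0 < M v)
    (hint : Integrable (fun v => ν v * (Real.log (G v) - Real.log (M v)) * (M v - G v)))
    (h0 : (∫ v, ν v * (Real.log (G v) - Real.log (M v)) * (M v - G v)) = 0) :
    G =ᵐ[volume] M := by
  have hle : ∀ v, ν v * (Real.log (G v) - Real.log (M v)) * (M v - G v) ≤ 0 := fun v => by
    rw [mul_assoc]
    exact mul_nonpos_of_nonneg_of_nonpos (hν v).le (factor_nonpos (hG v) (hM v))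
  have h := nonpos_int_zero hint hle h0
  filter_upwards [h] with v hv
  simp only [Pi.zero_apply] at hv
  rw [mul_assoc] at hv
  exact factor_eq (hG v) (hM v) ((mul_eq_zero.mp hv).resolve_left (ne_of_gt (hν v)))

lemma pull (c : ℝ) (F G : V3 → ℝ) (h : ∀ v, F v = c * G v) :
    (∫ v, F v) = c * ∫ v, G v := by
  rw [← integral_const_mul]
  exact integral_congr_ae (Filter.Eventually.of_forall fun v => h v)

lemma comb (ν f : V3 → ℝ) (m c₀ : ℝ) (c₁ : V3) (c₂ : ℝ)
    (h0 : Integrable (fun v => ν v * (f v)))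
    (h1 : ∀ i : Fin 3, Integrable (fun v => ν v * v i * (f v)))
    (h2 : Integrable (fun v => ν v * nsq v * (f v))) :
    Integrable (fun v => ν v * (m * (c₀ + dot3 c₁ v + c₂ * nsq v)) * f v) ∧
    (∫ v, ν v * (m * (c₀ + dot3 c₁ v + c₂ * nsq v)) * f v)
      = (m * c₀) * (∫ v, ν v * f v)
        + (m * c₁ 0) * (∫ v, ν v * v 0 * f v)
        + (m * c₁ 1) * (∫ v, ν v * v 1 * f v)
        + (m * c₁ 2) * (∫ v, ν v * v 2 * f v)
        + (m * c₂) * (∫ v, ν v * nsq v * f v) := by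
  have hfun : (fun v => ν v * (m * (c₀ + dot3 c₁ v + c₂ * nsq v)) * f v)
      = fun v => (m * c₀) * (ν v * f v) + (m * c₁ 0) * (ν v * v 0 * f v)
        + (m * c₁ 1) * (ν v * v 1 * f v) + (m * c₁ 2) * (ν v * v 2 * f v)
        + (m * c₂) * (ν v * nsq v * f v) := by
    funext v
    simp only [dot3, Fin.sum_univ_three]
    ring
  have hA : Integrable (fun v => (m * c₀) * (ν v * f v)) := h0.const_mul _
  have hB : Integrable (fun v => (m * c₁ 0) * (ν v * v 0 * f v)) := (h1 0).const_mul _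
  have hC : Integrable (fun v => (m * c₁ 1) * (ν v * v 1 * f v)) := (h1 1).const_mul _
  have hD : Integrable (fun v => (m * c₁ 2) * (ν v * v 2 * f v)) := (h1 2).const_mul _
  have hE : Integrable (fun v => (m * c₂) * (ν v * nsq v * f v)) := h2.const_mul _
  have hAB : Integrable (fun v => (m * c₀) * (ν v * f v)
      + (m * c₁ 0) * (ν v * v 0 * f v)) := hA.add hB
  have hABC : Integrable (fun v => (m * c₀) * (ν v * f v)
      + (m * c₁ 0) * (ν v * v 0 * f v) + (m * c₁ 1) * (ν v * v 1 * f v)) := hAB.add hC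
  have hABCD : Integrable (fun v => (m * c₀) * (ν v * f v)
      + (m * c₁ 0) * (ν v * v 0 * f v) + (m * c₁ 1) * (ν v * v 1 * f v)
      + (m * c₁ 2) * (ν v * v 2 * f v)) := hABC.add hD
  have hint : Integrable (fun v => ν v * (m * (c₀ + dot3 c₁ v + c₂ * nsq v)) * f v) := by
    rw [hfun]; exact hABCD.add hE
  refine ⟨hint, ?_⟩
  rw [hfun, integral_add hABCD hE, integral_add hABC hD, integral_add hAB hC,
    integral_add hA hB, integral_const_mul, integral_const_mul, integral_const_mul,
    integral_const_mul, integral_const_mul]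

end Helpers

/-- The inter-species moment constraints for `(g₁,g₂)` relative to `(M₁₂,M₂₁)`,
together with finiteness (integrability) of all the integrals appearing. -/
def interOK (m₁ m₂ : ℝ) (ν₁₂ ν₂₁ M₁₂ M₂₁ g₁ g₂ : V3 → ℝ) : Prop :=
  Integrable (fun v => ν₁₂ v * (M₁₂ v - g₁ v)) ∧
  (∀ i : Fin 3, Integrable (fun v => ν₁₂ v * v i * (M₁₂ v - g₁ v))) ∧
  Integrable (fun v => ν₁₂ v * nsq v * (M₁₂ v - g₁ v)) ∧
  Integrable (fun v => ν₂₁ v * (M₂₁ v - g₂ v)) ∧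
  (∀ i : Fin 3, Integrable (fun v => ν₂₁ v * v i * (M₂₁ v - g₂ v))) ∧
  Integrable (fun v => ν₂₁ v * nsq v * (M₂₁ v - g₂ v)) ∧
  (∫ v, m₁ * ν₁₂ v * (M₁₂ v - g₁ v)) = 0 ∧
  (∫ v, m₂ * ν₂₁ v * (M₂₁ v - g₂ v)) = 0 ∧
  (∀ i : Fin 3, (∫ v, m₁ * ν₁₂ v * v i * (M₁₂ v - g₁ v)) +
    (∫ v, m₂ * ν₂₁ v * v i * (M₂₁ v - g₂ v)) = 0) ∧
  (∫ v, m₁ * ν₁₂ v * nsq v * (M₁₂ v - g₁ v)) +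
    (∫ v, m₂ * ν₂₁ v * nsq v * (M₂₁ v - g₂ v)) = 0

/-- The intra-species moment constraints for the target `M` relative to `g`,
together with finiteness (integrability) of all the integrals appearing. -/
def intraOK (m : ℝ) (ν g M : V3 → ℝ) : Prop :=
  Integrable (fun v => ν v * (M v - g v)) ∧
  (∀ i : Fin 3, Integrable (fun v => ν v * v i * (M v - g v))) ∧
  Integrable (fun v => ν v * nsq v * (M v - g v)) ∧
  (∫ v, ν v * (m * (M v - g v))) = 0 ∧
  (∀ i : Fin 3, (∫ v, ν v * (m * v i * (M v - g v))) = 0) ∧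
  (∫ v, ν v * (m * nsq v * (M v - g v))) = 0

/-- A Maxwellian distribution of mass `m` with parameters `(a₀, a₁, a₂)`:
`v ↦ exp(m a₀ + m a₁·v + m a₂|v|²)`; its mean velocity is `−a₁/(2a₂)` and its
temperature is `−1/(2a₂)`. -/
def maxw (m a₀ : ℝ) (a₁ : V3) (a₂ : ℝ) : V3 → ℝ :=
  fun v => Real.exp (m * a₀ + m * dot3 a₁ v + m * a₂ * nsq v)

/-- H-Theorem: the total entropy dissipation `S(g₁,g₂)` is
nonpositive, and it vanishes if and only if `g₁` and `g₂` are Maxwellian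
distributions with equal mean velocity and equal temperature (i.e. Maxwellians
sharing the parameters `α₁` and `α₂ < 0`). -/
theorem total_dissipation_nonpositive
    (m₁ m₂ : ℝ) (hm₁ : 0 < m₁) (hm₂ : 0 < m₂)
    (ν₁₁ ν₁₂ ν₂₁ ν₂₂ : V3 → ℝ)
    (hν₁₁meas : Measurable ν₁₁) (hν₁₂meas : Measurable ν₁₂)
    (hν₂₁meas : Measurable ν₂₁) (hν₂₂meas : Measurable ν₂₂)
    (hν₁₁pos : ∀ v, 0 < ν₁₁ v) (hν₁₂pos : ∀ v, 0 < ν₁₂ v)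
    (hν₂₁pos : ∀ v, 0 < ν₂₁ v) (hν₂₂pos : ∀ v, 0 < ν₂₂ v)
    -- Assumption 3.1 for the four collision frequencies:
    (hass₁₁ : ∀ l : L5, Integrable (fun v => ν₁₁ v * expA m₁ l v) ↔ l.2.2 < 0)
    (hass₁₂ : ∀ l : L5, Integrable (fun v => ν₁₂ v * expA m₁ l v) ↔ l.2.2 < 0)
    (hass₂₁ : ∀ l : L5, Integrable (fun v => ν₂₁ v * expA m₂ l v) ↔ l.2.2 < 0)
    (hass₂₂ : ∀ l : L5, Integrable (fun v => ν₂₂ v * expA m₂ l v) ↔ l.2.2 < 0)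
    (hass₁₁' : ∀ l : L5, l.2.2 < 0 → Integrable (fun v => ν₁₁ v * (1 + nsq v) * expA m₁ l v))
    (hass₁₂' : ∀ l : L5, l.2.2 < 0 → Integrable (fun v => ν₁₂ v * (1 + nsq v) * expA m₁ l v))
    (hass₂₁' : ∀ l : L5, l.2.2 < 0 → Integrable (fun v => ν₂₁ v * (1 + nsq v) * expA m₂ l v))
    (hass₂₂' : ∀ l : L5, l.2.2 < 0 → Integrable (fun v => ν₂₂ v * (1 + nsq v) * expA m₂ l v))
    (g₁ g₂ : V3 → ℝ) (hg₁meas : Measurable g₁) (hg₂meas : Measurable g₂)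
    (hg₁ : ∀ v, 0 < g₁ v) (hg₂ : ∀ v, 0 < g₂ v)
    -- the single-species target Maxwellians, satisfying the intra-species
    -- constraints relative to g₁ resp. g₂:
    (ca₀ : ℝ) (ca₁ : V3) (ca₂ : ℝ) (hca₂ : ca₂ < 0)
    (cb₀ : ℝ) (cb₁ : V3) (cb₂ : ℝ) (hcb₂ : cb₂ < 0)
    (M₁₁ M₂₂ : V3 → ℝ)
    (hM₁₁def : M₁₁ = maxw m₁ ca₀ ca₁ ca₂) (hM₂₂def : M₂₂ = maxw m₂ cb₀ cb₁ cb₂)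
    (hintra₁ : intraOK m₁ ν₁₁ g₁ M₁₁) (hintra₂ : intraOK m₂ ν₂₂ g₂ M₂₂)
    -- the inter-species target Maxwellians with shared λ₁, λ₂, satisfying the
    -- inter-species constraints relative to (g₁,g₂):
    (la₀ lb₀ : ℝ) (l₁ : V3) (l₂ : ℝ) (hl₂ : l₂ < 0)
    (M₁₂ M₂₁ : V3 → ℝ)
    (hM₁₂def : M₁₂ = maxw m₁ la₀ l₁ l₂) (hM₂₁def : M₂₁ = maxw m₂ lb₀ l₁ l₂)
    (hinter : interOK m₁ m₂ ν₁₂ ν₂₁ M₁₂ M₂₁ g₁ g₂)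
    -- integrability of the four terms of the total dissipation S(g₁,g₂):
    (hS₁₁ : Integrable (fun v => ν₁₁ v * Real.log (g₁ v) * (M₁₁ v - g₁ v)))
    (hS₁₂ : Integrable (fun v => ν₁₂ v * Real.log (g₁ v) * (M₁₂ v - g₁ v)))
    (hS₂₁ : Integrable (fun v => ν₂₁ v * Real.log (g₂ v) * (M₂₁ v - g₂ v)))
    (hS₂₂ : Integrable (fun v => ν₂₂ v * Real.log (g₂ v) * (M₂₂ v - g₂ v)))
    -- the single-species dissipation estimate (assumed, following Struchtrup):
    (hdiss₁ : (∫ v, ν₁₁ v * Real.log (g₁ v / M₁₁ v) * (M₁₁ v - g₁ v)) ≤ 0 ∧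
      ((∫ v, ν₁₁ v * Real.log (g₁ v / M₁₁ v) * (M₁₁ v - g₁ v)) = 0 ↔
        g₁ =ᵐ[volume] M₁₁))
    (hdiss₂ : (∫ v, ν₂₂ v * Real.log (g₂ v / M₂₂ v) * (M₂₂ v - g₂ v)) ≤ 0 ∧
      ((∫ v, ν₂₂ v * Real.log (g₂ v / M₂₂ v) * (M₂₂ v - g₂ v)) = 0 ↔
        g₂ =ᵐ[volume] M₂₂)) :
    (∫ v, ν₁₁ v * Real.log (g₁ v) * (M₁₁ v - g₁ v)) +
        (∫ v, ν₁₂ v * Real.log (g₁ v) * (M₁₂ v - g₁ v)) +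
        (∫ v, ν₂₁ v * Real.log (g₂ v) * (M₂₁ v - g₂ v)) +
        (∫ v, ν₂₂ v * Real.log (g₂ v) * (M₂₂ v - g₂ v)) ≤ 0 ∧
    ((∫ v, ν₁₁ v * Real.log (g₁ v) * (M₁₁ v - g₁ v)) +
        (∫ v, ν₁₂ v * Real.log (g₁ v) * (M₁₂ v - g₁ v)) +
        (∫ v, ν₂₁ v * Real.log (g₂ v) * (M₂₁ v - g₂ v)) +
        (∫ v, ν₂₂ v * Real.log (g₂ v) * (M₂₂ v - g₂ v)) = 0 ↔
      ∃ (αa₀ αb₀ : ℝ) (α₁ : V3) (α₂ : ℝ), α₂ < 0 ∧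
        g₁ =ᵐ[volume] maxw m₁ αa₀ α₁ α₂ ∧ g₂ =ᵐ[volume] maxw m₂ αb₀ α₁ α₂) := by
  obtain ⟨hi0, hi1, hi2, hic0, hic1, hic2⟩ := hintra₁
  obtain ⟨hj0, hj1, hj2, hjc0, hjc1, hjc2⟩ := hintra₂
  obtain ⟨hk0, hk1, hk2, hn0, hn1, hn2, hq0, hq0', hq1, hq2⟩ := hinter
  -- positivity of the Maxwellians
  have hMp11 : ∀ v, 0 < M₁₁ v := by intro v; rw [hM₁₁def]; exact Real.exp_pos _
  have hMp22 : ∀ v, 0 < M₂₂ v := by intro v; rw [hM₂₂def]; exact Real.exp_pos _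
  have hMp12 : ∀ v, 0 < M₁₂ v := by intro v; rw [hM₁₂def]; exact Real.exp_pos _
  have hMp21 : ∀ v, 0 < M₂₁ v := by intro v; rw [hM₂₁def]; exact Real.exp_pos _
  -- logarithms of the Maxwellians
  have hlog11 : ∀ v, Real.log (M₁₁ v) = m₁ * (ca₀ + dot3 ca₁ v + ca₂ * nsq v) := by
    intro v; rw [hM₁₁def]; unfold maxw; rw [Real.log_exp]; ring
  have hlog22 : ∀ v, Real.log (M₂₂ v) = m₂ * (cb₀ + dot3 cb₁ v + cb₂ * nsq v) := by
    intro v; rw [hM₂₂def]; unfold maxw; rw [Real.log_exp]; ring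
  have hlog12 : ∀ v, Real.log (M₁₂ v) = m₁ * (la₀ + dot3 l₁ v + l₂ * nsq v) := by
    intro v; rw [hM₁₂def]; unfold maxw; rw [Real.log_exp]; ring
  have hlog21 : ∀ v, Real.log (M₂₁ v) = m₂ * (lb₀ + dot3 l₁ v + l₂ * nsq v) := by
    intro v; rw [hM₂₁def]; unfold maxw; rw [Real.log_exp]; ring
  -- intra-species moments vanish
  have hA0 : (∫ v, ν₁₁ v * (M₁₁ v - g₁ v)) = 0 := by
    have e := pull m₁ (fun v => ν₁₁ v * (m₁ * (M₁₁ v - g₁ v)))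
      (fun v => ν₁₁ v * (M₁₁ v - g₁ v)) (fun v => by beta_reduce; ring)
    beta_reduce at e
    have h := hic0; rw [e] at h
    exact (mul_eq_zero.mp h).resolve_left (ne_of_gt hm₁)
  have hA1 : ∀ i : Fin 3, (∫ v, ν₁₁ v * v i * (M₁₁ v - g₁ v)) = 0 := by
    intro i
    have e := pull m₁ (fun v => ν₁₁ v * (m₁ * v i * (M₁₁ v - g₁ v)))
      (fun v => ν₁₁ v * v i * (M₁₁ v - g₁ v)) (fun v => by beta_reduce; ring)
    beta_reduce at e
    have h := hic1 i; rw [e] at h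
    exact (mul_eq_zero.mp h).resolve_left (ne_of_gt hm₁)
  have hA2 : (∫ v, ν₁₁ v * nsq v * (M₁₁ v - g₁ v)) = 0 := by
    have e := pull m₁ (fun v => ν₁₁ v * (m₁ * nsq v * (M₁₁ v - g₁ v)))
      (fun v => ν₁₁ v * nsq v * (M₁₁ v - g₁ v)) (fun v => by beta_reduce; ring)
    beta_reduce at e
    have h := hic2; rw [e] at h
    exact (mul_eq_zero.mp h).resolve_left (ne_of_gt hm₁)
  have hB0 : (∫ v, ν₂₂ v * (M₂₂ v - g₂ v)) = 0 := by
    have e := pull m₂ (fun v => ν₂₂ v * (m₂ * (M₂₂ v - g₂ v)))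
      (fun v => ν₂₂ v * (M₂₂ v - g₂ v)) (fun v => by beta_reduce; ring)
    beta_reduce at e
    have h := hjc0; rw [e] at h
    exact (mul_eq_zero.mp h).resolve_left (ne_of_gt hm₂)
  have hB1 : ∀ i : Fin 3, (∫ v, ν₂₂ v * v i * (M₂₂ v - g₂ v)) = 0 := by
    intro i
    have e := pull m₂ (fun v => ν₂₂ v * (m₂ * v i * (M₂₂ v - g₂ v)))
      (fun v => ν₂₂ v * v i * (M₂₂ v - g₂ v)) (fun v => by beta_reduce; ring)
    beta_reduce at e
    have h := hjc1 i; rw [e] at h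
    exact (mul_eq_zero.mp h).resolve_left (ne_of_gt hm₂)
  have hB2 : (∫ v, ν₂₂ v * nsq v * (M₂₂ v - g₂ v)) = 0 := by
    have e := pull m₂ (fun v => ν₂₂ v * (m₂ * nsq v * (M₂₂ v - g₂ v)))
      (fun v => ν₂₂ v * nsq v * (M₂₂ v - g₂ v)) (fun v => by beta_reduce; ring)
    beta_reduce at e
    have h := hjc2; rw [e] at h
    exact (mul_eq_zero.mp h).resolve_left (ne_of_gt hm₂)
  -- inter-species moments
  have hP0 : (∫ v, ν₁₂ v * (M₁₂ v - g₁ v)) = 0 := by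
    have e := pull m₁ (fun v => m₁ * ν₁₂ v * (M₁₂ v - g₁ v))
      (fun v => ν₁₂ v * (M₁₂ v - g₁ v)) (fun v => by beta_reduce; ring)
    beta_reduce at e
    have h := hq0; rw [e] at h
    exact (mul_eq_zero.mp h).resolve_left (ne_of_gt hm₁)
  have hQ0 : (∫ v, ν₂₁ v * (M₂₁ v - g₂ v)) = 0 := by
    have e := pull m₂ (fun v => m₂ * ν₂₁ v * (M₂₁ v - g₂ v))
      (fun v => ν₂₁ v * (M₂₁ v - g₂ v)) (fun v => by beta_reduce; ring)
    beta_reduce at e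
    have h := hq0'; rw [e] at h
    exact (mul_eq_zero.mp h).resolve_left (ne_of_gt hm₂)
  have hmom : ∀ i : Fin 3, m₁ * (∫ v, ν₁₂ v * v i * (M₁₂ v - g₁ v))
      + m₂ * (∫ v, ν₂₁ v * v i * (M₂₁ v - g₂ v)) = 0 := by
    intro i
    have e1 := pull m₁ (fun v => m₁ * ν₁₂ v * v i * (M₁₂ v - g₁ v))
      (fun v => ν₁₂ v * v i * (M₁₂ v - g₁ v)) (fun v => by beta_reduce; ring)
    have e2 := pull m₂ (fun v => m₂ * ν₂₁ v * v i * (M₂₁ v - g₂ v))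
      (fun v => ν₂₁ v * v i * (M₂₁ v - g₂ v)) (fun v => by beta_reduce; ring)
    beta_reduce at e1 e2
    rw [← e1, ← e2]; exact hq1 i
  have hen : m₁ * (∫ v, ν₁₂ v * nsq v * (M₁₂ v - g₁ v))
      + m₂ * (∫ v, ν₂₁ v * nsq v * (M₂₁ v - g₂ v)) = 0 := by
    have e1 := pull m₁ (fun v => m₁ * ν₁₂ v * nsq v * (M₁₂ v - g₁ v))
      (fun v => ν₁₂ v * nsq v * (M₁₂ v - g₁ v)) (fun v => by beta_reduce; ring)
    have e2 := pull m₂ (fun v => m₂ * ν₂₁ v * nsq v * (M₂₁ v - g₂ v))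
      (fun v => ν₂₁ v * nsq v * (M₂₁ v - g₂ v)) (fun v => by beta_reduce; ring)
    beta_reduce at e1 e2
    rw [← e1, ← e2]; exact hq2
  -- the comb decompositions for the log-Maxwellian weights
  have hcomb1 := comb ν₁₁ (fun v => M₁₁ v - g₁ v) m₁ ca₀ ca₁ ca₂ hi0 hi1 hi2
  have hcomb2 := comb ν₂₂ (fun v => M₂₂ v - g₂ v) m₂ cb₀ cb₁ cb₂ hj0 hj1 hj2
  have hcombI1 := comb ν₁₂ (fun v => M₁₂ v - g₁ v) m₁ la₀ l₁ l₂ hk0 hk1 hk2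
  have hcombI2 := comb ν₂₁ (fun v => M₂₁ v - g₂ v) m₂ lb₀ l₁ l₂ hn0 hn1 hn2
  beta_reduce at hcomb1 hcomb2 hcombI1 hcombI2
  -- split S₁₁ = D₁
  have hIint1 : Integrable (fun v => ν₁₁ v * Real.log (g₁ v / M₁₁ v) * (M₁₁ v - g₁ v)) := by
    refine (hS₁₁.sub hcomb1.1).congr (Filter.Eventually.of_forall fun v => ?_)
    simp only [Pi.sub_apply]
    rw [Real.log_div (ne_of_gt (hg₁ v)) (ne_of_gt (hMp11 v)), ← hlog11 v]; ring
  have hsplit1 : (∫ v, ν₁₁ v * Real.log (g₁ v) * (M₁₁ v - g₁ v))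
      = ∫ v, ν₁₁ v * Real.log (g₁ v / M₁₁ v) * (M₁₁ v - g₁ v) := by
    calc (∫ v, ν₁₁ v * Real.log (g₁ v) * (M₁₁ v - g₁ v))
        = ∫ v, (ν₁₁ v * Real.log (g₁ v / M₁₁ v) * (M₁₁ v - g₁ v)
            + ν₁₁ v * (m₁ * (ca₀ + dot3 ca₁ v + ca₂ * nsq v)) * (M₁₁ v - g₁ v)) :=
          integral_congr_ae (Filter.Eventually.of_forall fun v => by
            beta_reduce
            rw [Real.log_div (ne_of_gt (hg₁ v)) (ne_of_gt (hMp11 v)), ← hlog11 v]; ring)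
      _ = (∫ v, ν₁₁ v * Real.log (g₁ v / M₁₁ v) * (M₁₁ v - g₁ v))
            + ∫ v, ν₁₁ v * (m₁ * (ca₀ + dot3 ca₁ v + ca₂ * nsq v)) * (M₁₁ v - g₁ v) :=
          integral_add hIint1 hcomb1.1
      _ = ∫ v, ν₁₁ v * Real.log (g₁ v / M₁₁ v) * (M₁₁ v - g₁ v) := by
          rw [hcomb1.2, hA0, hA2, hA1 0, hA1 1, hA1 2]; ring
  -- split S₂₂ = D₂
  have hIint2 : Integrable (fun v => ν₂₂ v * Real.log (g₂ v / M₂₂ v) * (M₂₂ v - g₂ v)) := by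
    refine (hS₂₂.sub hcomb2.1).congr (Filter.Eventually.of_forall fun v => ?_)
    simp only [Pi.sub_apply]
    rw [Real.log_div (ne_of_gt (hg₂ v)) (ne_of_gt (hMp22 v)), ← hlog22 v]; ring
  have hsplit2 : (∫ v, ν₂₂ v * Real.log (g₂ v) * (M₂₂ v - g₂ v))
      = ∫ v, ν₂₂ v * Real.log (g₂ v / M₂₂ v) * (M₂₂ v - g₂ v) := by
    calc (∫ v, ν₂₂ v * Real.log (g₂ v) * (M₂₂ v - g₂ v))
        = ∫ v, (ν₂₂ v * Real.log (g₂ v / M₂₂ v) * (M₂₂ v - g₂ v)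
            + ν₂₂ v * (m₂ * (cb₀ + dot3 cb₁ v + cb₂ * nsq v)) * (M₂₂ v - g₂ v)) :=
          integral_congr_ae (Filter.Eventually.of_forall fun v => by
            beta_reduce
            rw [Real.log_div (ne_of_gt (hg₂ v)) (ne_of_gt (hMp22 v)), ← hlog22 v]; ring)
      _ = (∫ v, ν₂₂ v * Real.log (g₂ v / M₂₂ v) * (M₂₂ v - g₂ v))
            + ∫ v, ν₂₂ v * (m₂ * (cb₀ + dot3 cb₁ v + cb₂ * nsq v)) * (M₂₂ v - g₂ v) :=
          integral_add hIint2 hcomb2.1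
      _ = ∫ v, ν₂₂ v * Real.log (g₂ v / M₂₂ v) * (M₂₂ v - g₂ v) := by
          rw [hcomb2.2, hB0, hB2, hB1 0, hB1 1, hB1 2]; ring
  -- split S₁₂ = I₁ + Z₁₂ and S₂₁ = I₂ + Z₂₁
  have hJint1 : Integrable (fun v => ν₁₂ v * (Real.log (g₁ v) - Real.log (M₁₂ v))
      * (M₁₂ v - g₁ v)) := by
    refine (hS₁₂.sub hcombI1.1).congr (Filter.Eventually.of_forall fun v => ?_)
    simp only [Pi.sub_apply]
    rw [← hlog12 v]; ring
  have hJint2 : Integrable (fun v => ν₂₁ v * (Real.log (g₂ v) - Real.log (M₂₁ v))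
      * (M₂₁ v - g₂ v)) := by
    refine (hS₂₁.sub hcombI2.1).congr (Filter.Eventually.of_forall fun v => ?_)
    simp only [Pi.sub_apply]
    rw [← hlog21 v]; ring
  have hsplitJ1 : (∫ v, ν₁₂ v * Real.log (g₁ v) * (M₁₂ v - g₁ v))
      = (∫ v, ν₁₂ v * (Real.log (g₁ v) - Real.log (M₁₂ v)) * (M₁₂ v - g₁ v))
        + ∫ v, ν₁₂ v * (m₁ * (la₀ + dot3 l₁ v + l₂ * nsq v)) * (M₁₂ v - g₁ v) := by
    rw [← integral_add hJint1 hcombI1.1]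
    exact integral_congr_ae (Filter.Eventually.of_forall fun v => by
      beta_reduce
      rw [← hlog12 v]; ring)
  have hsplitJ2 : (∫ v, ν₂₁ v * Real.log (g₂ v) * (M₂₁ v - g₂ v))
      = (∫ v, ν₂₁ v * (Real.log (g₂ v) - Real.log (M₂₁ v)) * (M₂₁ v - g₂ v))
        + ∫ v, ν₂₁ v * (m₂ * (lb₀ + dot3 l₁ v + l₂ * nsq v)) * (M₂₁ v - g₂ v) := by
    rw [← integral_add hJint2 hcombI2.1]
    exact integral_congr_ae (Filter.Eventually.of_forall fun v => by
      beta_reduce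
      rw [← hlog21 v]; ring)
  have hZsum : (∫ v, ν₁₂ v * (m₁ * (la₀ + dot3 l₁ v + l₂ * nsq v)) * (M₁₂ v - g₁ v))
      + (∫ v, ν₂₁ v * (m₂ * (lb₀ + dot3 l₁ v + l₂ * nsq v)) * (M₂₁ v - g₂ v)) = 0 := by
    rw [hcombI1.2, hcombI2.2]
    linear_combination (m₁ * la₀) * hP0 + (m₂ * lb₀) * hQ0 + l₁ 0 * hmom 0
      + l₁ 1 * hmom 1 + l₁ 2 * hmom 2 + l₂ * hen
  -- nonpositivity of the inter-species parts
  have hJle1 : ∀ v, ν₁₂ v * (Real.log (g₁ v) - Real.log (M₁₂ v)) * (M₁₂ v - g₁ v) ≤ 0 := by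
    intro v; rw [mul_assoc]
    exact mul_nonpos_of_nonneg_of_nonpos (hν₁₂pos v).le (factor_nonpos (hg₁ v) (hMp12 v))
  have hJle2 : ∀ v, ν₂₁ v * (Real.log (g₂ v) - Real.log (M₂₁ v)) * (M₂₁ v - g₂ v) ≤ 0 := by
    intro v; rw [mul_assoc]
    exact mul_nonpos_of_nonneg_of_nonpos (hν₂₁pos v).le (factor_nonpos (hg₂ v) (hMp21 v))
  have hJ1le : (∫ v, ν₁₂ v * (Real.log (g₁ v) - Real.log (M₁₂ v)) * (M₁₂ v - g₁ v)) ≤ 0 :=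
    integral_nonpos fun v => hJle1 v
  have hJ2le : (∫ v, ν₂₁ v * (Real.log (g₂ v) - Real.log (M₂₁ v)) * (M₂₁ v - g₂ v)) ≤ 0 :=
    integral_nonpos fun v => hJle2 v
  constructor
  · linarith [hdiss₁.1, hdiss₂.1]
  constructor
  · -- forward direction
    intro h0
    have hJ10 : (∫ v, ν₁₂ v * (Real.log (g₁ v) - Real.log (M₁₂ v)) * (M₁₂ v - g₁ v)) = 0 := by
      linarith [hdiss₁.1, hdiss₂.1]
    have hJ20 : (∫ v, ν₂₁ v * (Real.log (g₂ v) - Real.log (M₂₁ v)) * (M₂₁ v - g₂ v)) = 0 := by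
      linarith [hdiss₁.1, hdiss₂.1]
    have hg1M : g₁ =ᵐ[volume] M₁₂ := extract_eq ν₁₂ g₁ M₁₂ hν₁₂pos hg₁ hMp12 hJint1 hJ10
    have hg2M : g₂ =ᵐ[volume] M₂₁ := extract_eq ν₂₁ g₂ M₂₁ hν₂₁pos hg₂ hMp21 hJint2 hJ20
    refine ⟨la₀, lb₀, l₁, l₂, hl₂, ?_, ?_⟩
    · rw [← hM₁₂def]; exact hg1M
    · rw [← hM₂₁def]; exact hg2M
  · -- backward direction
    rintro ⟨a0, b0, al, a2, ha2, hga, hgb⟩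
    have hGap : ∀ v, 0 < maxw m₁ a0 al a2 v := fun v => Real.exp_pos _
    have hGbp : ∀ v, 0 < maxw m₂ b0 al a2 v := fun v => Real.exp_pos _
    have hloga : ∀ v, Real.log (maxw m₁ a0 al a2 v) = m₁ * (a0 + dot3 al v + a2 * nsq v) := by
      intro v; unfold maxw; rw [Real.log_exp]; ring
    have hlogb : ∀ v, Real.log (maxw m₂ b0 al a2 v) = m₂ * (b0 + dot3 al v + a2 * nsq v) := by
      intro v; unfold maxw; rw [Real.log_exp]; ring
    -- g₁ =ᵐ M₁₁
    have hcombU1 := comb ν₁₁ (fun v => M₁₁ v - g₁ v) m₁ (a0 - ca₀)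
      (fun i => al i - ca₁ i) (a2 - ca₂) hi0 hi1 hi2
    beta_reduce at hcombU1
    have hptAE1 : (fun v => ν₁₁ v * (m₁ * ((a0 - ca₀) + dot3 (fun i => al i - ca₁ i) v
        + (a2 - ca₂) * nsq v)) * (M₁₁ v - g₁ v))
        =ᵐ[volume] (fun v => ν₁₁ v * (Real.log (maxw m₁ a0 al a2 v) - Real.log (M₁₁ v))
          * (M₁₁ v - maxw m₁ a0 al a2 v)) := by
      filter_upwards [hga] with v hv
      beta_reduce
      rw [hv, hloga v, hlog11 v]
      simp only [dot3, Fin.sum_univ_three]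
      ring
    have hW1 : (∫ v, ν₁₁ v * (Real.log (maxw m₁ a0 al a2 v) - Real.log (M₁₁ v))
        * (M₁₁ v - maxw m₁ a0 al a2 v)) = 0 := by
      rw [← integral_congr_ae hptAE1, hcombU1.2, hA0, hA2, hA1 0, hA1 1, hA1 2]; ring
    have hGaM : maxw m₁ a0 al a2 =ᵐ[volume] M₁₁ :=
      extract_eq ν₁₁ (maxw m₁ a0 al a2) M₁₁ hν₁₁pos hGap hMp11
        (hcombU1.1.congr hptAE1) hW1
    have hg1M11 : g₁ =ᵐ[volume] M₁₁ := hga.trans hGaM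
    -- g₂ =ᵐ M₂₂
    have hcombU2 := comb ν₂₂ (fun v => M₂₂ v - g₂ v) m₂ (b0 - cb₀)
      (fun i => al i - cb₁ i) (a2 - cb₂) hj0 hj1 hj2
    beta_reduce at hcombU2
    have hptAE2 : (fun v => ν₂₂ v * (m₂ * ((b0 - cb₀) + dot3 (fun i => al i - cb₁ i) v
        + (a2 - cb₂) * nsq v)) * (M₂₂ v - g₂ v))
        =ᵐ[volume] (fun v => ν₂₂ v * (Real.log (maxw m₂ b0 al a2 v) - Real.log (M₂₂ v))
          * (M₂₂ v - maxw m₂ b0 al a2 v)) := by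
      filter_upwards [hgb] with v hv
      beta_reduce
      rw [hv, hlogb v, hlog22 v]
      simp only [dot3, Fin.sum_univ_three]
      ring
    have hW2 : (∫ v, ν₂₂ v * (Real.log (maxw m₂ b0 al a2 v) - Real.log (M₂₂ v))
        * (M₂₂ v - maxw m₂ b0 al a2 v)) = 0 := by
      rw [← integral_congr_ae hptAE2, hcombU2.2, hB0, hB2, hB1 0, hB1 1, hB1 2]; ring
    have hGbM : maxw m₂ b0 al a2 =ᵐ[volume] M₂₂ :=
      extract_eq ν₂₂ (maxw m₂ b0 al a2) M₂₂ hν₂₂pos hGbp hMp22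
        (hcombU2.1.congr hptAE2) hW2
    have hg2M22 : g₂ =ᵐ[volume] M₂₂ := hgb.trans hGbM
    -- g₁ =ᵐ M₁₂ and g₂ =ᵐ M₂₁ (joint argument)
    have hcombV1 := comb ν₁₂ (fun v => M₁₂ v - g₁ v) m₁ (a0 - la₀)
      (fun i => al i - l₁ i) (a2 - l₂) hk0 hk1 hk2
    beta_reduce at hcombV1
    have hcombV2 := comb ν₂₁ (fun v => M₂₁ v - g₂ v) m₂ (b0 - lb₀)
      (fun i => al i - l₁ i) (a2 - l₂) hn0 hn1 hn2
    beta_reduce at hcombV2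
    have hptBE1 : (fun v => ν₁₂ v * (m₁ * ((a0 - la₀) + dot3 (fun i => al i - l₁ i) v
        + (a2 - l₂) * nsq v)) * (M₁₂ v - g₁ v))
        =ᵐ[volume] (fun v => ν₁₂ v * (Real.log (maxw m₁ a0 al a2 v) - Real.log (M₁₂ v))
          * (M₁₂ v - maxw m₁ a0 al a2 v)) := by
      filter_upwards [hga] with v hv
      beta_reduce
      rw [hv, hloga v, hlog12 v]
      simp only [dot3, Fin.sum_univ_three]
      ring
    have hptBE2 : (fun v => ν₂₁ v * (m₂ * ((b0 - lb₀) + dot3 (fun i => al i - l₁ i) v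
        + (a2 - l₂) * nsq v)) * (M₂₁ v - g₂ v))
        =ᵐ[volume] (fun v => ν₂₁ v * (Real.log (maxw m₂ b0 al a2 v) - Real.log (M₂₁ v))
          * (M₂₁ v - maxw m₂ b0 al a2 v)) := by
      filter_upwards [hgb] with v hv
      beta_reduce
      rw [hv, hlogb v, hlog21 v]
      simp only [dot3, Fin.sum_univ_three]
      ring
    have hWsum : (∫ v, ν₁₂ v * (Real.log (maxw m₁ a0 al a2 v) - Real.log (M₁₂ v))
        * (M₁₂ v - maxw m₁ a0 al a2 v))
        + (∫ v, ν₂₁ v * (Real.log (maxw m₂ b0 al a2 v) - Real.log (M₂₁ v))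
          * (M₂₁ v - maxw m₂ b0 al a2 v)) = 0 := by
      rw [← integral_congr_ae hptBE1, ← integral_congr_ae hptBE2, hcombV1.2, hcombV2.2]
      linear_combination (m₁ * (a0 - la₀)) * hP0 + (m₂ * (b0 - lb₀)) * hQ0
        + (al 0 - l₁ 0) * hmom 0 + (al 1 - l₁ 1) * hmom 1 + (al 2 - l₁ 2) * hmom 2
        + (a2 - l₂) * hen
    have hV1le : (∫ v, ν₁₂ v * (Real.log (maxw m₁ a0 al a2 v) - Real.log (M₁₂ v))
        * (M₁₂ v - maxw m₁ a0 al a2 v)) ≤ 0 :=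
      integral_nonpos fun v => by
        rw [mul_assoc]
        exact mul_nonpos_of_nonneg_of_nonpos (hν₁₂pos v).le
          (factor_nonpos (hGap v) (hMp12 v))
    have hV2le : (∫ v, ν₂₁ v * (Real.log (maxw m₂ b0 al a2 v) - Real.log (M₂₁ v))
        * (M₂₁ v - maxw m₂ b0 al a2 v)) ≤ 0 :=
      integral_nonpos fun v => by
        rw [mul_assoc]
        exact mul_nonpos_of_nonneg_of_nonpos (hν₂₁pos v).le
          (factor_nonpos (hGbp v) (hMp21 v))
    have hV10 : (∫ v, ν₁₂ v * (Real.log (maxw m₁ a0 al a2 v) - Real.log (M₁₂ v))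
        * (M₁₂ v - maxw m₁ a0 al a2 v)) = 0 := by linarith
    have hV20 : (∫ v, ν₂₁ v * (Real.log (maxw m₂ b0 al a2 v) - Real.log (M₂₁ v))
        * (M₂₁ v - maxw m₂ b0 al a2 v)) = 0 := by linarith
    have hGaM12 : maxw m₁ a0 al a2 =ᵐ[volume] M₁₂ :=
      extract_eq ν₁₂ (maxw m₁ a0 al a2) M₁₂ hν₁₂pos hGap hMp12
        (hcombV1.1.congr hptBE1) hV10
    have hGbM21 : maxw m₂ b0 al a2 =ᵐ[volume] M₂₁ :=
      extract_eq ν₂₁ (maxw m₂ b0 al a2) M₂₁ hν₂₁pos hGbp hMp21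
        (hcombV2.1.congr hptBE2) hV20
    have hg1M12 : g₁ =ᵐ[volume] M₁₂ := hga.trans hGaM12
    have hg2M21 : g₂ =ᵐ[volume] M₂₁ := hgb.trans hGbM21
    -- all four pieces vanish
    have hD10 : (∫ v, ν₁₁ v * Real.log (g₁ v / M₁₁ v) * (M₁₁ v - g₁ v)) = 0 :=
      hdiss₁.2.mpr hg1M11
    have hD20 : (∫ v, ν₂₂ v * Real.log (g₂ v / M₂₂ v) * (M₂₂ v - g₂ v)) = 0 :=
      hdiss₂.2.mpr hg2M22
    have hJ10 : (∫ v, ν₁₂ v * (Real.log (g₁ v) - Real.log (M₁₂ v)) * (M₁₂ v - g₁ v)) = 0 := by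
      have hz : (fun v => ν₁₂ v * (Real.log (g₁ v) - Real.log (M₁₂ v)) * (M₁₂ v - g₁ v))
          =ᵐ[volume] (fun _ => (0 : ℝ)) := by
        filter_upwards [hg1M12] with v hv
        beta_reduce
        rw [hv]; ring
      rw [integral_congr_ae hz, integral_zero]
    have hJ20 : (∫ v, ν₂₁ v * (Real.log (g₂ v) - Real.log (M₂₁ v)) * (M₂₁ v - g₂ v)) = 0 := by
      have hz : (fun v => ν₂₁ v * (Real.log (g₂ v) - Real.log (M₂₁ v)) * (M₂₁ v - g₂ v))
          =ᵐ[volume] (fun _ => (0 : ℝ)) := by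
        filter_upwards [hg2M21] with v hv
        beta_reduce
        rw [hv]; ring
      rw [integral_congr_ae hz, integral_zero]
    linarith
end
end
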